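/- arXiv:1402.3044 — 11 statements merged into one kernel-verified Lean document; each statement's English description precedes it below -/
import Mathlib

section
/- Let α = (α_1, …, α_K) be a nonincreasing OWA vector of nonnegative reals. Then the set function u^α : 2^A → ℝ is nondecreasing (W ⊆ W' implies u^α(W) ≤ u^α(W')) and submodular (for all W ⊆ W' ⊆ A and all a ∈ A ∖ W', u^α(W ∪ {a}) − u^α(W) ≥ u^α(W' ∪ {a}) − u^α(W')). -/
/-!
Write `x_j(M)` for the `j`-th largest entry of a multiset `M` (indexed from `0`, zero past its
end) and `T_k(M) = x_0(M) + ⋯ + x_{k-1}(M)`. For nonnegative entries, enlarging `M` raises every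
`x_j`, which gives monotonicity. Inserting `c ≥ 0` raises `T_{k+1}` by exactly `max (c - x_k) 0`,
which shrinks as `M` grows. Hence for `M ≤ M'` the marginal vectors `g_j = x_j(c ::ₘ M) - x_j(M)`
and `g'_j = x_j(c ::ₘ M') - x_j(M')` are such that `g - g'` has nonnegative partial sums, and
summation by parts against the nonnegative, nonincreasing `α` gives `∑ α_j g'_j ≤ ∑ α_j g_j`.
-/

open Finset

/-- The OWA-aggregated total utility of a set `W` of items: for each agent `i` in `N`,
the intrinsic utilities of the items of `W` are sorted in nonincreasing order
`x_0 ≥ x_1 ≥ …` and the agent contributes `∑_{j < K} α j * x_j`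
(positions beyond `|W|` contribute `0`).  The OWA vector is `0`-indexed:
`α j` is entry `α_{j+1}` of the paper. -/
noncomputable def owaUtil {I A : Type*} [DecidableEq A]
    (N : Finset I) (u : I → A → ℝ) (K : ℕ) (α : ℕ → ℝ) (W : Finset A) : ℝ :=
  ∑ i ∈ N, ∑ j ∈ Finset.range K,
    α j * (((W.1.map (u i)).sort (· ≤ ·)).reverse.getD j 0)

namespace List

variable {R : Type*}

lemma getD_eq_default_or_mem (l : List R) (d : R) (n : ℕ) :
    l.getD n d = d ∨ l.getD n d ∈ l := by
  rcases lt_or_ge n l.length with h | h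
  · exact .inr (getD_eq_getElem _ _ h ▸ getElem_mem h)
  · exact .inl (getD_eq_default _ _ h)

lemma getD_succ_le_getD [Preorder R] [Zero R] {l : List R} (hl : l.Pairwise (· ≥ ·))
    (h0 : ∀ x ∈ l, 0 ≤ x) (n : ℕ) : l.getD (n + 1) 0 ≤ l.getD n 0 := by
  rcases lt_or_ge (n + 1) l.length with h | h
  · rw [getD_eq_getElem _ _ h, getD_eq_getElem _ _ (by omega)]
    exact pairwise_iff_getElem.mp hl n (n + 1) _ h (by omega)
  · rw [getD_eq_default _ _ h]
    rcases getD_eq_default_or_mem l 0 n with h' | h'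
    · rw [h']
    · exact h0 _ h'

lemma sum_range_getD_eq_sum_take [AddCommMonoid R] (l : List R) (k : ℕ) :
    ∑ j ∈ Finset.range k, l.getD j 0 = (l.take k).sum := by
  induction k generalizing l with
  | zero => simp
  | succ k ih =>
    rw [Finset.sum_range_succ']
    cases l with
    | nil => simp
    | cons a t =>
      simp only [getD_cons_succ, getD_cons_zero, take_succ_cons, sum_cons, ih t, add_comm]

end List

theorem Finset.sum_range_mul_nonneg_of_sum_range_nonneg {R : Type*} [Ring R] [PartialOrder R]
    [IsOrderedRing R] {K : ℕ} {α g : ℕ → R} (hα_nonneg : ∀ j, j < K → 0 ≤ α j)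
    (hα_mono : ∀ j k, j ≤ k → k < K → α k ≤ α j) (hg : ∀ k ≤ K, 0 ≤ ∑ j ∈ range k, g j) :
    0 ≤ ∑ j ∈ range K, α j * g j := by
  rcases Nat.eq_zero_or_pos K with rfl | hK
  · simp
  rw [show ∑ j ∈ range K, α j * g j = ∑ j ∈ range K, α j • g j from rfl, sum_range_by_parts,
    sub_eq_add_neg, ← sum_neg_distrib]
  simp only [smul_eq_mul, ← neg_mul, neg_sub]
  refine add_nonneg (mul_nonneg (hα_nonneg _ (by omega)) (hg _ le_rfl)) (sum_nonneg fun i hi => ?_)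
  have hi : i + 1 < K := by rw [mem_range] at hi; omega
  exact mul_nonneg (sub_nonneg.mpr (hα_mono i (i + 1) i.le_succ hi)) (hg _ hi.le)

namespace Multiset

variable {R : Type*} [LinearOrder R]

def sortDesc (M : Multiset R) : List R := (M.sort (· ≤ ·)).reverse

-- The `(j + 1)`-st largest element of `M`, counted with multiplicity; `0` once `card M ≤ j`.
def nthLargest [Zero R] (M : Multiset R) (j : ℕ) : R := (sortDesc M).getD j 0

def topSum [AddCommMonoid R] (M : Multiset R) (k : ℕ) : R :=
  ∑ j ∈ Finset.range k, nthLargest M j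

def owaValue [Semiring R] (K : ℕ) (α : ℕ → R) (M : Multiset R) : R :=
  ∑ j ∈ Finset.range K, α j * nthLargest M j

variable {M M' : Multiset R} {c : R}

lemma pairwise_sortDesc (M : Multiset R) : (sortDesc M).Pairwise (· ≥ ·) :=
  List.pairwise_reverse.mpr (M.pairwise_sort _)

@[simp]
lemma mem_sortDesc {x : R} : x ∈ sortDesc M ↔ x ∈ M := by
  simp [sortDesc]

lemma exists_sortDesc_cons (c : R) (M : Multiset R) :
    ∃ A B : List R, sortDesc M = A ++ B ∧ sortDesc (c ::ₘ M) = A ++ c :: B ∧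
      (∀ x ∈ A, c ≤ x) ∧ (∀ x ∈ B, x ≤ c) := by
  have hsort : (c ::ₘ M).sort (· ≤ ·) = (M.sort (· ≤ ·)).orderedInsert (· ≤ ·) c := by
    refine List.Perm.eq_of_pairwise' (pairwise_sort _ _)
      ((pairwise_sort M _).orderedInsert c _) ?_
    refine List.Perm.trans ?_ (List.perm_orderedInsert _ c _).symm
    rw [← coe_eq_coe, sort_eq, ← cons_coe, sort_eq]
  set small := (M.sort (· ≤ ·)).takeWhile fun b => ¬c ≤ b
  set large := (M.sort (· ≤ ·)).dropWhile fun b => ¬c ≤ b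
  have hcM : sortDesc (c ::ₘ M) = large.reverse ++ c :: small.reverse := by
    simp [sortDesc, hsort, List.orderedInsert_eq_take_drop, small, large]
  have hdesc := pairwise_sortDesc (c ::ₘ M)
  rw [hcM, List.pairwise_append, List.pairwise_cons] at hdesc
  refine ⟨large.reverse, small.reverse, ?_, hcM, fun x hx => hdesc.2.2 x hx c List.mem_cons_self,
    hdesc.2.1.1⟩
  simp [sortDesc, small, large]

lemma nthLargest_le_nthLargest_cons [Zero R] (hc : 0 ≤ c) (hM : ∀ x ∈ M, 0 ≤ x) (j : ℕ) :
    nthLargest M j ≤ nthLargest (c ::ₘ M) j := by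
  obtain ⟨A, B, hM', hcM, -, -⟩ := exists_sortDesc_cons c M
  rcases lt_or_ge j A.length with hj | hj
  · simp only [nthLargest, hM', hcM, List.getD_append _ _ _ _ hj, le_refl]
  calc nthLargest M j = (sortDesc (c ::ₘ M)).getD (j + 1) 0 := by
        rw [nthLargest, hM', hcM, List.getD_append_right _ _ _ _ hj,
          List.getD_append_right _ _ _ _ (by omega), Nat.sub_add_comm hj, List.getD_cons_succ]
    _ ≤ nthLargest (c ::ₘ M) j :=
        List.getD_succ_le_getD (pairwise_sortDesc _) (by simpa using ⟨hc, hM⟩) j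

lemma nthLargest_mono [Zero R] (h : M ≤ M') (h0 : ∀ x ∈ M', 0 ≤ x) (j : ℕ) :
    nthLargest M j ≤ nthLargest M' j := by
  obtain ⟨t, rfl⟩ := le_iff_exists_add.mp h
  clear h
  induction t using Multiset.induction with
  | empty => simp
  | cons a t ih =>
    rw [add_cons] at h0 ⊢
    have h0' : ∀ x ∈ M + t, 0 ≤ x := fun x hx => h0 x (mem_cons_of_mem hx)
    exact (ih h0').trans (nthLargest_le_nthLargest_cons (h0 a (mem_cons_self a _)) h0' j)

lemma topSum_eq_sum_take [AddCommMonoid R] (M : Multiset R) (k : ℕ) :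
    topSum M k = ((sortDesc M).take k).sum :=
  List.sum_range_getD_eq_sum_take _ k

lemma topSum_succ_cons [AddCommMonoid R] (hc : 0 ≤ c) (M : Multiset R) (k : ℕ) :
    topSum (c ::ₘ M) (k + 1) = topSum M k + max c (nthLargest M k) := by
  obtain ⟨A, B, hM, hcM, hA, hB⟩ := exists_sortDesc_cons c M
  rw [topSum_eq_sum_take, topSum_eq_sum_take, hM, hcM, List.take_append, List.take_append]
  rcases lt_or_ge k A.length with hk | hk
  · have hx : nthLargest M k = A[k] := by
      rw [nthLargest, hM, List.getD_append _ _ _ _ hk, List.getD_eq_getElem _ _ hk]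
    rw [max_eq_right (hx ▸ hA _ (List.getElem_mem hk)), hx, Nat.sub_eq_zero_of_le hk,
      Nat.sub_eq_zero_of_le hk.le, List.take_zero, List.take_zero, List.append_nil,
      List.append_nil, List.sum_take_succ _ _ hk]
  · have hx : nthLargest M k = B.getD (k - A.length) 0 := by
      rw [nthLargest, hM, List.getD_append_right _ _ _ _ hk]
    have hxc : nthLargest M k ≤ c := by
      rcases List.getD_eq_default_or_mem B 0 (k - A.length) with h | h
      · rwa [hx, h]
      · exact hx ▸ hB _ h
    rw [max_eq_left hxc, List.take_of_length_le (by omega), List.take_of_length_le hk,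
      Nat.sub_add_comm hk, List.take_succ_cons, List.sum_append, List.sum_append, List.sum_cons]
    abel

lemma topSum_cons_sub_le [AddCommGroup R] [IsOrderedAddMonoid R] (hc : 0 ≤ c) (h : M ≤ M')
    (h0 : ∀ x ∈ M', 0 ≤ x) (k : ℕ) :
    topSum (c ::ₘ M') k - topSum M' k ≤ topSum (c ::ₘ M) k - topSum M k := by
  cases k with
  | zero => simp [topSum]
  | succ k =>
    have hsucc (M : Multiset R) : topSum M (k + 1) = topSum M k + nthLargest M k :=
      sum_range_succ _ _
    rw [topSum_succ_cons hc, topSum_succ_cons hc, hsucc, hsucc, add_sub_add_left_eq_sub,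
      add_sub_add_left_eq_sub, ← max_sub_sub_right, ← max_sub_sub_right, sub_self, sub_self]
    gcongr
    exact nthLargest_mono h h0 k

lemma owaValue_mono [Semiring R] [IsOrderedRing R] {K : ℕ} {α : ℕ → R}
    (hα_nonneg : ∀ j, j < K → 0 ≤ α j) (h : M ≤ M') (h0 : ∀ x ∈ M', 0 ≤ x) :
    owaValue K α M ≤ owaValue K α M' :=
  sum_le_sum fun j hj =>
    mul_le_mul_of_nonneg_left (nthLargest_mono h h0 j) (hα_nonneg j (mem_range.mp hj))

lemma owaValue_cons_sub_le [Ring R] [IsOrderedRing R] {K : ℕ} {α : ℕ → R}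
    (hα_nonneg : ∀ j, j < K → 0 ≤ α j) (hα_mono : ∀ j k, j ≤ k → k < K → α k ≤ α j)
    (hc : 0 ≤ c) (h : M ≤ M') (h0 : ∀ x ∈ M', 0 ≤ x) :
    owaValue K α (c ::ₘ M') - owaValue K α M' ≤ owaValue K α (c ::ₘ M) - owaValue K α M := by
  rw [← sub_nonneg]
  convert sum_range_mul_nonneg_of_sum_range_nonneg hα_nonneg hα_mono
    (g := fun j => (nthLargest (c ::ₘ M) j - nthLargest M j) -
      (nthLargest (c ::ₘ M') j - nthLargest M' j))
    (fun k _ => by simpa [sum_sub_distrib, topSum] using topSum_cons_sub_le hc h h0 k) using 1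
  simp only [owaValue, ← sum_sub_distrib, mul_sub]

end Multiset

/-- For a nonincreasing, nonnegative OWA vector `α = (α_1, …, α_K)`, the set function
`u^α` is nondecreasing and submodular. -/
theorem stmt_0 {I A : Type*} [DecidableEq A]
    (N : Finset I) (u : I → A → ℝ) (hu : ∀ i a, 0 ≤ u i a)
    (K : ℕ) (α : ℕ → ℝ)
    (hα_nonneg : ∀ j, j < K → 0 ≤ α j)
    (hα_mono : ∀ j k, j ≤ k → k < K → α k ≤ α j) :
    (∀ W W' : Finset A, W ⊆ W' → owaUtil N u K α W ≤ owaUtil N u K α W') ∧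
    (∀ W W' : Finset A, W ⊆ W' → ∀ a, a ∉ W' →
      owaUtil N u K α (insert a W') - owaUtil N u K α W' ≤
        owaUtil N u K α (insert a W) - owaUtil N u K α W) := by
  have hval : ∀ W : Finset A, owaUtil N u K α W = ∑ i ∈ N, (W.1.map (u i)).owaValue K α :=
    fun W => rfl
  have hmap {W W' : Finset A} (h : W ⊆ W') (i : I) : W.1.map (u i) ≤ W'.1.map (u i) :=
    Multiset.map_le_map (val_le_iff.mpr h)
  have hnonneg (i : I) (W : Finset A) : ∀ x ∈ W.1.map (u i), 0 ≤ x := by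
    simp only [Multiset.mem_map]
    rintro _ ⟨a, -, rfl⟩
    exact hu i a
  refine ⟨fun W W' h => ?_, fun W W' h a ha => ?_⟩
  · simp only [hval]
    exact sum_le_sum fun i _ => Multiset.owaValue_mono hα_nonneg (hmap h i) (hnonneg i W')
  · simp only [hval, ← sum_sub_distrib, insert_val_of_notMem ha,
      insert_val_of_notMem fun haW => ha (h haW), Multiset.map_cons]
    exact sum_le_sum fun i _ =>
      Multiset.owaValue_cons_sub_le hα_nonneg hα_mono (hu i a) (hmap h i) (hnonneg i W')
end

section
/- Let α = (α_1, …, α_K) be a nonincreasing OWA vector of nonnegative reals with α_1 > 0, and assume K ≤ |A|. Let W be any size-K subset of A maximizing u^{K-best} over all size-K subsets of A (equivalently, maximizing W ↦ Σ_{w∈W} Σ_{i∈N} u_{i,w}). Then u^α(W) ≥ ((Σ_{j=1}^K α_j)/(K·α_1)) · max_{S ⊆ A, |S| = K} u^α(S). -/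
open Finset

/-!
Every size-`K` set `S` has `u^α(S) ≤ α_1 · Σ_{w∈S} Σ_i u_{i,w}`, since each OWA weight is at most
`α_1`; so the optimum is at most `α_1` times the total utility of the `K`-best winner `W`.
Conversely, the sorted utilities of an agent and the OWA weights are both nonincreasing, so
Chebyshev's sum inequality gives `(Σ_j α_j) · Σ_{w∈W} u_{i,w} ≤ K · Σ_j α_j x_j^{(i)}` for each
agent, i.e. `(Σ_j α_j) · Σ_{w∈W} Σ_i u_{i,w} ≤ K · u^α(W)`.
-/

theorem List.sum_range_length_getD {M : Type*} [AddCommMonoid M] (L : List M) :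
    ∑ j ∈ Finset.range L.length, L.getD j 0 = L.sum := by
  induction L with
  | nil => simp
  | cons a l ih =>
    rw [List.length_cons, Finset.sum_range_succ']
    simp only [List.getD_cons_succ, List.getD_cons_zero, List.sum_cons, ih, add_comm]

namespace OWA

variable {A : Type*}

noncomputable def sortedDesc (x : A → ℝ) (S : Finset A) : List ℝ :=
  ((S.1.map x).sort (· ≤ ·)).reverse

variable (x : A → ℝ) (S : Finset A)

@[simp]
theorem length_sortedDesc : (sortedDesc x S).length = S.card := by
  simp [sortedDesc]

theorem mem_sortedDesc {y : ℝ} : y ∈ sortedDesc x S ↔ ∃ a ∈ S, x a = y := by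
  simp [sortedDesc]

theorem sum_range_card_getD_sortedDesc :
    ∑ j ∈ range S.card, (sortedDesc x S).getD j 0 = ∑ w ∈ S, x w := by
  rw [← length_sortedDesc, List.sum_range_length_getD, sortedDesc, List.sum_reverse,
    ← Multiset.sum_coe, Multiset.sort_eq]
  rfl

theorem getD_sortedDesc_nonneg (hx : ∀ a ∈ S, 0 ≤ x a) (j : ℕ) :
    0 ≤ (sortedDesc x S).getD j 0 := by
  rcases lt_or_ge j (sortedDesc x S).length with hj | hj
  · rw [List.getD_eq_getElem _ _ hj]
    obtain ⟨a, ha, hxa⟩ := (mem_sortedDesc x S).1 (List.getElem_mem hj)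
    exact hxa ▸ hx a ha
  · rw [List.getD_eq_default _ _ hj]

theorem antitoneOn_getD_sortedDesc :
    AntitoneOn (fun j => (sortedDesc x S).getD j 0) (range S.card) := by
  intro j hj k hk hjk
  simp only [coe_range, Set.mem_Iio, ← length_sortedDesc x S] at hj hk
  dsimp only
  rw [List.getD_eq_getElem _ _ hj, List.getD_eq_getElem _ _ hk]
  have hsorted : (sortedDesc x S).Pairwise (· ≥ ·) :=
    List.pairwise_reverse.2 (Multiset.pairwise_sort _ _)
  rcases hjk.eq_or_lt with rfl | hlt
  · rfl
  · exact List.pairwise_iff_getElem.1 hsorted j k hj hk hlt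

variable {x S} {K : ℕ} {α : ℕ → ℝ}

theorem sum_owa_le_head_mul_sum (hx : ∀ a ∈ S, 0 ≤ x a) (hα : ∀ j < K, α j ≤ α 0)
    (hS : S.card = K) :
    ∑ j ∈ range K, α j * (sortedDesc x S).getD j 0 ≤ α 0 * ∑ w ∈ S, x w := by
  rw [← sum_range_card_getD_sortedDesc x S, hS, mul_sum]
  exact sum_le_sum fun j hj =>
    mul_le_mul_of_nonneg_right (hα j (mem_range.1 hj)) (getD_sortedDesc_nonneg x S hx j)

theorem sum_mul_sum_le_card_mul_sum_owa (hα : AntitoneOn α (range K)) (hS : S.card = K) :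
    (∑ j ∈ range K, α j) * ∑ w ∈ S, x w ≤
      K * ∑ j ∈ range K, α j * (sortedDesc x S).getD j 0 := by
  rw [← sum_range_card_getD_sortedDesc x S, hS]
  have hmono : MonovaryOn α (fun j => (sortedDesc x S).getD j 0) (range K) := by
    subst hS
    exact hα.monovaryOn (antitoneOn_getD_sortedDesc x S)
  simpa using hmono.sum_mul_sum_le_card_mul_sum

end OWA

open OWA

section

variable {I A : Type*} [DecidableEq A] {N : Finset I} {u : I → A → ℝ} {K : ℕ} {α : ℕ → ℝ}
  {S : Finset A}

theorem owaUtil_nonneg (hu : ∀ i ∈ N, ∀ a ∈ S, 0 ≤ u i a) (hα : ∀ j < K, 0 ≤ α j) :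
    0 ≤ owaUtil N u K α S :=
  sum_nonneg fun i hi => sum_nonneg fun j hj =>
    mul_nonneg (hα j (mem_range.1 hj)) (getD_sortedDesc_nonneg (u i) S (hu i hi) j)

theorem owaUtil_le_head_mul_sum (hu : ∀ i ∈ N, ∀ a ∈ S, 0 ≤ u i a)
    (hα : ∀ j < K, α j ≤ α 0) (hS : S.card = K) :
    owaUtil N u K α S ≤ α 0 * ∑ w ∈ S, ∑ i ∈ N, u i w := by
  rw [sum_comm, mul_sum]
  exact sum_le_sum fun i hi => sum_owa_le_head_mul_sum (hu i hi) hα hS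

theorem sum_mul_sum_le_card_mul_owaUtil (hα : AntitoneOn α (range K)) (hS : S.card = K) :
    (∑ j ∈ range K, α j) * ∑ w ∈ S, ∑ i ∈ N, u i w ≤ K * owaUtil N u K α S := by
  rw [sum_comm, mul_sum, owaUtil, mul_sum]
  exact sum_le_sum fun i _ => sum_mul_sum_le_card_mul_sum_owa hα hS

end

theorem stmt_3_general {I A : Type*} [DecidableEq A] [Fintype A]
    (N : Finset I) (u : I → A → ℝ) (hu : ∀ i a, 0 ≤ u i a)
    (K : ℕ)
    (α : ℕ → ℝ)
    (hα_nonneg : ∀ j, j < K → 0 ≤ α j)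
    (hα_mono : ∀ j k, j ≤ k → k < K → α k ≤ α j)
    (hα1 : 0 < α 0)
    (W : Finset A) (hWcard : W.card = K)
    (hWopt : ∀ S : Finset A, S.card = K →
      ∑ w ∈ S, ∑ i ∈ N, u i w ≤ ∑ w ∈ W, ∑ i ∈ N, u i w)
    (hne : ((Finset.univ : Finset A).powersetCard K).Nonempty) :
    ((∑ j ∈ Finset.range K, α j) / (K * α 0)) *
        ((Finset.univ : Finset A).powersetCard K).sup' hne (owaUtil N u K α) ≤
      owaUtil N u K α W := by
  set T := ∑ w ∈ W, ∑ i ∈ N, u i w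
  have hαsum : 0 ≤ ∑ j ∈ range K, α j :=
    sum_nonneg fun j hj => hα_nonneg j (mem_range.1 hj)
  have hα_anti : AntitoneOn α (range K) := fun j _ k hk hjk =>
    hα_mono j k hjk (mem_range.1 hk)
  have hopt : (univ.powersetCard K).sup' hne (owaUtil N u K α) ≤ α 0 * T :=
    sup'_le _ _ fun S hS => by
      have hS : S.card = K := (mem_powersetCard.1 hS).2
      calc owaUtil N u K α S ≤ α 0 * ∑ w ∈ S, ∑ i ∈ N, u i w :=
            owaUtil_le_head_mul_sum (fun i _ a _ => hu i a)
              (fun j hj => hα_mono 0 j j.zero_le hj) hS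
        _ ≤ α 0 * T := by gcongr; exact hWopt S hS
  calc (∑ j ∈ range K, α j) / (K * α 0) * (univ.powersetCard K).sup' hne (owaUtil N u K α)
      ≤ (∑ j ∈ range K, α j) / (K * α 0) * (α 0 * T) := by gcongr
    _ = (∑ j ∈ range K, α j) * T / K := by field_simp
    _ ≤ owaUtil N u K α W :=
      div_le_of_le_mul₀ K.cast_nonneg (owaUtil_nonneg (fun i _ a _ => hu i a) hα_nonneg)
        (by rw [mul_comm _ (K : ℝ)]; exact sum_mul_sum_le_card_mul_owaUtil hα_anti hWcard)

/-- For a nonincreasing nonnegative OWA `α` with `α_1 > 0`, any size-`K` set `W`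
maximizing the `K`-best utility (i.e., the total intrinsic utility
`∑_{w ∈ W} ∑_{i ∈ N} u_{i,w}`) is a `(∑_{j=1}^K α_j)/(K·α_1)`-approximate solution
for `α`-OWA-Winner. -/
theorem stmt_3 {I A : Type*} [DecidableEq A] [Fintype A]
    (N : Finset I) (u : I → A → ℝ) (hu : ∀ i a, 0 ≤ u i a)
    (K : ℕ) (hK : 1 ≤ K) (hKm : K ≤ Fintype.card A)
    (α : ℕ → ℝ)
    (hα_nonneg : ∀ j, j < K → 0 ≤ α j)
    (hα_mono : ∀ j k, j ≤ k → k < K → α k ≤ α j)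
    (hα1 : 0 < α 0)
    (W : Finset A) (hWcard : W.card = K)
    (hWopt : ∀ S : Finset A, S.card = K →
      ∑ w ∈ S, ∑ i ∈ N, u i w ≤ ∑ w ∈ W, ∑ i ∈ N, u i w)
    (hne : ((Finset.univ : Finset A).powersetCard K).Nonempty) :
    ((∑ j ∈ Finset.range K, α j) / (K * α 0)) *
        ((Finset.univ : Finset A).powersetCard K).sup' hne (owaUtil N u K α) ≤
      owaUtil N u K α W :=
  stmt_3_general N u hu K α hα_nonneg hα_mono hα1 W hWcard hWopt hne
end

section
/- Let K ≥ 2, λ ∈ [0,1], and let h = (λ, 0, …, 0, 1−λ) be the Hurwicz[λ] OWA of length K, so that u^h(W) = Σ_{i∈N} (λ · max_{w∈W} u_{i,w} + (1−λ) · min_{w∈W} u_{i,w}) for every W ⊆ A with |W| = K. Let β ∈ [0,1] and suppose W ⊆ A with |W| = K satisfies u^{1-best}(W) ≥ β · max_{S ⊆ A, |S| = K} u^{1-best}(S). Then u^h(W) ≥ λ·β · max_{S ⊆ A, |S| = K} u^h(S). -/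
/-!
Since `min ≤ max`, every agent gets at most its best utility from the Hurwicz OWA, so the
Hurwicz optimum is at most the `1`-best optimum. Since utilities are nonnegative, dropping the
`(1 - λ) · min` term shows that `W` gets at least `λ` times its `1`-best value from the Hurwicz
OWA. Chaining these with the `β`-approximation of `W` gives the factor `λ β`.
-/

open Finset

section SortedImage

variable {A β : Type*} [LinearOrder β] (f : A → β) {S : Finset A}

lemma getLast_sort_map_eq_sup' (hS : S.Nonempty) (h : (S.1.map f).sort (· ≤ ·) ≠ []) :
    ((S.1.map f).sort (· ≤ ·)).getLast h = S.sup' hS f := by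
  refine le_antisymm ?_ <| sup'_le _ _ fun a ha =>
    (Multiset.pairwise_sort _ _).rel_getLast (by simpa using ⟨a, ha, rfl⟩)
  obtain ⟨a, ha, hfa⟩ := Multiset.mem_map.mp <| (Multiset.mem_sort _).mp (List.getLast_mem h)
  exact hfa ▸ le_sup' f ha

lemma head_sort_map_eq_inf' (hS : S.Nonempty) (h : (S.1.map f).sort (· ≤ ·) ≠ []) :
    ((S.1.map f).sort (· ≤ ·)).head h = S.inf' hS f := by
  refine le_antisymm (le_inf' _ _ fun a ha =>
    (Multiset.pairwise_sort _ _).rel_head (by simpa using ⟨a, ha, rfl⟩)) ?_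
  obtain ⟨a, ha, hfa⟩ := Multiset.mem_map.mp <| (Multiset.mem_sort _).mp (List.head_mem h)
  exact hfa ▸ inf'_le f ha

lemma getD_reverse_sort_map_zero (hS : S.Nonempty) (d : β) :
    ((S.1.map f).sort (· ≤ ·)).reverse.getD 0 d = S.sup' hS f := by
  have h : (S.1.map f).sort (· ≤ ·) ≠ [] := by simpa [← List.length_pos_iff] using hS.card_pos
  rw [← getLast_sort_map_eq_sup' f hS h, List.getD_eq_getElem _ _ (by simpa using hS.card_pos),
    List.getElem_reverse, List.getLast_eq_getElem]
  simp

lemma getD_reverse_sort_map_card_sub_one (hS : S.Nonempty) (d : β) :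
    ((S.1.map f).sort (· ≤ ·)).reverse.getD (S.card - 1) d = S.inf' hS f := by
  have h : (S.1.map f).sort (· ≤ ·) ≠ [] := by simpa [← List.length_pos_iff] using hS.card_pos
  rw [← head_sort_map_eq_inf' f hS h, List.getD_eq_getElem _ _ (by simpa using hS.card_pos),
    List.getElem_reverse, List.head_eq_getElem]
  simp

end SortedImage

def oneBestOWA : ℕ → ℝ := fun j => if j = 0 then 1 else 0

def hurwiczOWA (K : ℕ) (lam : ℝ) : ℕ → ℝ :=
  fun j => if j = 0 then lam else if j = K - 1 then 1 - lam else 0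

section OWA

variable {I A : Type*} [DecidableEq A] (N : Finset I) (u : I → A → ℝ) {K : ℕ} {S : Finset A}

lemma owaUtil_oneBestOWA (hK : 0 < K) (hS : S.Nonempty) :
    owaUtil N u K oneBestOWA S = ∑ i ∈ N, S.sup' hS (u i) := by
  refine sum_congr rfl fun i _ => ?_
  rw [sum_eq_single_of_mem 0 (mem_range.2 hK) fun j _ hj => by simp [oneBestOWA, hj]]
  simp only [oneBestOWA, ↓reduceIte, one_mul]
  exact getD_reverse_sort_map_zero _ hS 0

lemma owaUtil_hurwiczOWA (lam : ℝ) (hS : S.Nonempty) (hSK : S.card = K) (hK : K ≠ 1) :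
    owaUtil N u K (hurwiczOWA K lam) S =
      ∑ i ∈ N, (lam * S.sup' hS (u i) + (1 - lam) * S.inf' hS (u i)) := by
  have hK2 : 2 ≤ K := by have := hS.card_pos; omega
  refine sum_congr rfl fun i _ => ?_
  rw [sum_eq_add_of_mem 0 (K - 1) (by simp; omega) (by simp; omega) (by omega)
    fun j _ hj => by simp [hurwiczOWA, hj.1, hj.2]]
  simp only [hurwiczOWA, ↓reduceIte, if_neg (by omega : K - 1 ≠ 0)]
  rw [getD_reverse_sort_map_zero _ hS, ← hSK, getD_reverse_sort_map_card_sub_one _ hS]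

lemma owaUtil_hurwiczOWA_le_oneBestOWA {lam : ℝ} (hlam : lam ≤ 1) (hK : 2 ≤ K)
    (hSK : S.card = K) :
    owaUtil N u K (hurwiczOWA K lam) S ≤ owaUtil N u K oneBestOWA S := by
  have hS : S.Nonempty := card_pos.mp (by omega)
  rw [owaUtil_hurwiczOWA N u lam hS hSK (by omega), owaUtil_oneBestOWA N u (by omega) hS]
  gcongr with i
  obtain ⟨a, ha⟩ := hS
  have hmin_le_max : S.inf' ⟨a, ha⟩ (u i) ≤ S.sup' ⟨a, ha⟩ (u i) :=
    (inf'_le _ ha).trans (le_sup' _ ha)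
  nlinarith

lemma mul_owaUtil_oneBestOWA_le_hurwiczOWA (hu : ∀ i a, 0 ≤ u i a) {lam : ℝ} (hlam : lam ≤ 1)
    (hK : 2 ≤ K) (hSK : S.card = K) :
    lam * owaUtil N u K oneBestOWA S ≤ owaUtil N u K (hurwiczOWA K lam) S := by
  have hS : S.Nonempty := card_pos.mp (by omega)
  rw [owaUtil_hurwiczOWA N u lam hS hSK (by omega), owaUtil_oneBestOWA N u (by omega) hS, mul_sum]
  gcongr with i
  exact le_add_of_nonneg_right <| mul_nonneg (sub_nonneg.2 hlam) (le_inf' _ _ fun a _ => hu i a)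

end OWA

/-- A `β`-approximate solution `W` for `1`-best-OWA-Winner is a `λ·β`-approximate
solution for `Hurwicz[λ]`-OWA-Winner, where the Hurwicz OWA of length `K ≥ 2` is
`(λ, 0, …, 0, 1 − λ)`, so that `u^h(W) = ∑_i (λ·max_{w∈W} u_{i,w} + (1−λ)·min_{w∈W} u_{i,w})`
for every size-`K` set `W`. -/
theorem stmt_4 {I A : Type*} [DecidableEq A] [Fintype A]
    (N : Finset I) (u : I → A → ℝ) (hu : ∀ i a, 0 ≤ u i a)
    (K : ℕ) (hK : 2 ≤ K)
    (lam : ℝ) (hlam : lam ∈ Set.Icc (0 : ℝ) 1)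
    (β : ℝ) (hβ : β ∈ Set.Icc (0 : ℝ) 1)
    (hne : ((Finset.univ : Finset A).powersetCard K).Nonempty)
    (W : Finset A) (hWcard : W.card = K)
    (hWapx : β * ((Finset.univ : Finset A).powersetCard K).sup' hne
          (owaUtil N u K (fun j => if j = 0 then (1 : ℝ) else 0)) ≤
        owaUtil N u K (fun j => if j = 0 then (1 : ℝ) else 0) W) :
    (∀ S : Finset A, ∀ hS : S.card = K,
      owaUtil N u K (fun j => if j = 0 then lam else if j = K - 1 then 1 - lam else 0) S =
        ∑ i ∈ N, (lam * S.sup' (Finset.card_pos.mp (by omega)) (u i) +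
          (1 - lam) * S.inf' (Finset.card_pos.mp (by omega)) (u i))) ∧
    lam * β * ((Finset.univ : Finset A).powersetCard K).sup' hne
        (owaUtil N u K (fun j => if j = 0 then lam else if j = K - 1 then 1 - lam else 0)) ≤
      owaUtil N u K (fun j => if j = 0 then lam else if j = K - 1 then 1 - lam else 0) W := by
  obtain ⟨hlam0, hlam1⟩ := hlam
  refine ⟨fun S hS => owaUtil_hurwiczOWA N u lam (card_pos.mp (by omega)) hS (by omega), ?_⟩
  have hopt : (univ.powersetCard K).sup' hne (owaUtil N u K (hurwiczOWA K lam)) ≤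
      (univ.powersetCard K).sup' hne (owaUtil N u K oneBestOWA) :=
    sup'_mono_fun fun S hS =>
      owaUtil_hurwiczOWA_le_oneBestOWA N u hlam1 hK (mem_powersetCard.mp hS).2
  calc lam * β * (univ.powersetCard K).sup' hne (owaUtil N u K (hurwiczOWA K lam))
      ≤ lam * (β * (univ.powersetCard K).sup' hne (owaUtil N u K oneBestOWA)) := by
        rw [mul_assoc]; gcongr; exact hβ.1
    _ ≤ lam * owaUtil N u K oneBestOWA W := mul_le_mul_of_nonneg_left hWapx hlam0
    _ ≤ owaUtil N u K (hurwiczOWA K lam) W :=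
        mul_owaUtil_oneBestOWA_le_hurwiczOWA N u hu hlam1 hK hWcard
end

section
/- Let G = (V, E) be a graph with |V| = m and |E| = n, and let K be an integer with 3 ≤ K ≤ m−1. Consider the OWA-Winner instance whose items are V, whose agents are, for each edge e = {v, v'} ∈ E, two agents e^1 and e^2, where e^1 has utility 1 exactly for v and v' (and 0 elsewhere) and e^2 has utility 1 exactly for the items of V ∖ {v, v'} (and 0 on v and v'), with committee size K and the (K−1)-best OWA (K−1 ones followed by one zero). Then for every W ⊆ V with |W| = K, u^{(K−1)-best}(W) = (K−1)·n + |{e ∈ E : e ∩ W ≠ ∅}|. Consequently, the maximum of u^{(K−1)-best} over size-K subsets of V equals K·n if and only if G has a vertex cover of size at most K. -/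
open Finset

open scoped Classical

/-- The total utility of a size-`K` committee `W ⊆ V` in the instance obtained from a
graph `G`: agents are the pairs `(e, 0)` and `(e, 1)` for edges `e`, where `(e, 0)`
approves exactly the endpoints of `e` and `(e, 1)` approves exactly the non-endpoints,
and the OWA is the `(K−1)`-best one. -/
noncomputable def stmt7util {V : Type*} [Fintype V] [DecidableEq V]
    (G : SimpleGraph V) [DecidableRel G.Adj] (K : ℕ) : Finset V → ℝ :=
  owaUtil (G.edgeFinset ×ˢ (Finset.univ : Finset (Fin 2)))
    (fun q v =>
      if q.2 = 0 then (if v ∈ q.1 then (1 : ℝ) else 0)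
      else (if v ∈ q.1 then (0 : ℝ) else 1))
    K (fun j => if j < K - 1 then (1 : ℝ) else 0)

/-!
An agent with `0/1` utilities approving `c` members of `W` gets `min c (K - 1)` under the
`(K - 1)`-best OWA. An edge meets `W` in `c ≤ 2 ≤ K - 1` vertices, so its two agents get `c` and
`min (K - c) (K - 1)`, which add up to `K - 1`, plus one exactly when `c > 0`. Summing over the
edges gives `(K - 1) n + #{covered edges} ≤ K n`, with equality iff `W` is a vertex cover, and a
cover of size at most `K` extends to one of size exactly `K`.
-/

lemma List.getD_replicate_one_append_replicate_zero (c d j : ℕ) :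
    (List.replicate c (1 : ℝ) ++ List.replicate d 0).getD j 0 = if j < c then 1 else 0 := by
  split_ifs with h
  · rw [List.getD_append _ _ _ _ (by simpa using h), List.getD_replicate _ h]
  · rw [List.getD_append_right _ _ _ _ (by simpa using h), List.length_replicate]
    by_cases h' : j - c < d
    · rw [List.getD_replicate _ h']
    · rw [List.getD_eq_default _ _ (by simpa using h')]

lemma Finset.map_boole_val {A : Type*} (W : Finset A) (P : A → Prop) [DecidablePred P] :
    W.1.map (fun v => if P v then (1 : ℝ) else 0) =
      ((List.replicate #{v ∈ W | ¬P v} (0 : ℝ) ++ List.replicate #{v ∈ W | P v} 1 : List ℝ) :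
        Multiset ℝ) := by
  rw [← Multiset.filter_add_not P W.1, add_comm, Multiset.map_add, ← Multiset.coe_add,
    Multiset.coe_replicate, Multiset.coe_replicate]
  congr 1
  · rw [Multiset.map_congr rfl fun v hv => if_neg (Multiset.mem_filter.mp hv).2,
      Multiset.map_const']
    rfl
  · rw [Multiset.map_congr rfl fun v hv => if_pos (Multiset.mem_filter.mp hv).2,
      Multiset.map_const']
    rfl

lemma Finset.sort_map_boole_val_reverse {A : Type*} (W : Finset A) (P : A → Prop)
    [DecidablePred P] :
    ((W.1.map fun v => if P v then (1 : ℝ) else 0).sort (· ≤ ·)).reverse =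
      List.replicate #{v ∈ W | P v} 1 ++ List.replicate #{v ∈ W | ¬P v} 0 := by
  have hsorted : (List.replicate #{v ∈ W | ¬P v} (0 : ℝ) ++
      List.replicate #{v ∈ W | P v} 1).Pairwise (· ≤ ·) := by
    simp only [List.pairwise_append, List.pairwise_replicate, le_refl, or_true, true_and]
    intro a ha b hb
    rw [List.eq_of_mem_replicate ha, List.eq_of_mem_replicate hb]
    exact zero_le_one
  rw [map_boole_val, Multiset.coe_sort, List.mergeSort_eq_self _ hsorted,
    List.reverse_append, List.reverse_replicate, List.reverse_replicate]

lemma Finset.sum_kBest_boole {A : Type*} (W : Finset A) (P : A → Prop) [DecidablePred P]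
    {k K : ℕ} (hk : k ≤ K) :
    ∑ j ∈ range K, (if j < k then (1 : ℝ) else 0) *
      ((W.1.map fun v => if P v then (1 : ℝ) else 0).sort (· ≤ ·)).reverse.getD j 0 =
      (min #{v ∈ W | P v} k : ℕ) := by
  simp only [sort_map_boole_val_reverse, List.getD_replicate_one_append_replicate_zero]
  rw [← card_range (min _ k)]
  simp only [ite_zero_mul_ite_zero, mul_one, sum_boole]
  congr 3
  ext j
  simp only [mem_filter, mem_range]
  omega

lemma Sym2.card_filter_mem_le_two {V : Type*} [DecidableEq V] (W : Finset V) (e : Sym2 V) :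
    #{v ∈ W | v ∈ e} ≤ 2 :=
  calc #{v ∈ W | v ∈ e} ≤ #e.toFinset :=
        card_le_card fun v hv => Sym2.mem_toFinset.mpr (mem_filter.mp hv).2
    _ ≤ 2 := by rw [Sym2.card_toFinset]; split_ifs <;> norm_num

lemma Sym2.min_card_filter_mem_add_min_card_filter_not_mem {V : Type*} [DecidableEq V]
    {K : ℕ} (hK : 3 ≤ K) {W : Finset V} (hW : #W = K) (e : Sym2 V) :
    min #{v ∈ W | v ∈ e} (K - 1) + min #{v ∈ W | v ∉ e} (K - 1) =
      K - 1 + if ∃ v ∈ W, v ∈ e then 1 else 0 := by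
  have hsplit := card_filter_add_card_filter_not (s := W) (fun v => v ∈ e)
  have hmeet : (∃ v ∈ W, v ∈ e) ↔ 0 < #{v ∈ W | v ∈ e} := by
    rw [card_pos, filter_nonempty_iff]
  have := e.card_filter_mem_le_two W
  split_ifs with h <;> rw [hmeet] at h <;> omega

namespace SimpleGraph

variable {V : Type*} [Fintype V] [DecidableEq V] (G : SimpleGraph V) [DecidableRel G.Adj]

lemma stmt7util_eq {K : ℕ} (hK : 3 ≤ K) {W : Finset V} (hW : #W = K) :
    stmt7util G K W =
      ((K : ℝ) - 1) * #G.edgeFinset + #{e ∈ G.edgeFinset | ∃ v ∈ W, v ∈ e} := by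
  have hedge : ∀ e : Sym2 V, ∑ b : Fin 2, ∑ j ∈ range K,
      (if j < K - 1 then (1 : ℝ) else 0) * ((W.1.map fun v =>
        if b = 0 then (if v ∈ e then (1 : ℝ) else 0) else (if v ∈ e then 0 else 1)).sort
          (· ≤ ·)).reverse.getD j 0 =
      ((K : ℝ) - 1) + if ∃ v ∈ W, v ∈ e then 1 else 0 := by
    intro e
    have hcompl : (fun v => if v ∈ e then (0 : ℝ) else 1) = fun v => if v ∉ e then 1 else 0 :=
      funext fun v => (ite_not _ _ _).symm
    simp only [Fin.sum_univ_two, if_true, one_ne_zero, if_false, hcompl]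
    rw [sum_kBest_boole _ _ (Nat.sub_le K 1), sum_kBest_boole _ _ (Nat.sub_le K 1),
      ← Nat.cast_add, e.min_card_filter_mem_add_min_card_filter_not_mem hK hW]
    push_cast [Nat.cast_sub (by omega : 1 ≤ K)]
    rfl
  unfold stmt7util owaUtil
  rw [sum_product, sum_congr rfl fun e _ => hedge e, sum_add_distrib, sum_const, sum_boole,
    nsmul_eq_mul]
  ring

lemma stmt7util_le {K : ℕ} (hK : 3 ≤ K) {W : Finset V} (hW : #W = K) :
    stmt7util G K W ≤ K * #G.edgeFinset := by
  have : (#{e ∈ G.edgeFinset | ∃ v ∈ W, v ∈ e} : ℝ) ≤ #G.edgeFinset := by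
    exact_mod_cast card_filter_le _ _
  rw [G.stmt7util_eq hK hW]
  linarith

lemma stmt7util_eq_iff {K : ℕ} (hK : 3 ≤ K) {W : Finset V} (hW : #W = K) :
    stmt7util G K W = K * #G.edgeFinset ↔ ∀ e ∈ G.edgeFinset, ∃ v ∈ W, v ∈ e := by
  rw [G.stmt7util_eq hK hW, ← card_filter_eq_iff]
  constructor <;> intro h
  · exact_mod_cast (by linarith : (#{e ∈ G.edgeFinset | ∃ v ∈ W, v ∈ e} : ℝ) = #G.edgeFinset)
  · rw [h]
    ring

end SimpleGraph

theorem stmt_7_general {V : Type*} [Fintype V] [DecidableEq V]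
    (G : SimpleGraph V) [DecidableRel G.Adj]
    (n K : ℕ) (hn : G.edgeFinset.card = n)
    (hK : 3 ≤ K)
    (hne : ((Finset.univ : Finset V).powersetCard K).Nonempty) :
    (∀ W : Finset V, W.card = K →
      stmt7util G K W =
        ((K : ℝ) - 1) * (n : ℝ) +
          ((G.edgeFinset.filter (fun e => ∃ v ∈ W, v ∈ e)).card : ℝ)) ∧
    ((((Finset.univ : Finset V).powersetCard K).sup' hne (stmt7util G K) =
        (K : ℝ) * (n : ℝ)) ↔
      ∃ C : Finset V, C.card ≤ K ∧ ∀ e ∈ G.edgeFinset, ∃ v ∈ C, v ∈ e) := by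
  subst hn
  refine ⟨fun W hW => G.stmt7util_eq hK hW, ⟨fun hsup => ?_, fun ⟨C, hCK, hC⟩ => ?_⟩⟩
  · obtain ⟨W, hWmem, hWmax⟩ := exists_mem_eq_sup' hne (stmt7util G K)
    have hW := (mem_powersetCard.mp hWmem).2
    exact ⟨W, hW.le, (G.stmt7util_eq_iff hK hW).mp (hWmax ▸ hsup)⟩
  · have hKV : K ≤ Fintype.card V := card_univ (α := V) ▸ powersetCard_nonempty.mp hne
    obtain ⟨W, hCW, hW⟩ := exists_superset_card_eq hCK hKV
    have hWopt := (G.stmt7util_eq_iff hK hW).mpr fun e he =>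
      (hC e he).imp fun v hv => ⟨hCW hv.1, hv.2⟩
    exact le_antisymm (sup'_le _ _ fun U hU => G.stmt7util_le hK (mem_powersetCard.mp hU).2)
      (hWopt ▸ le_sup' _ (mem_powersetCard.mpr ⟨subset_univ W, hW⟩))

/-- Correctness of the reduction from VertexCover to `(K−1)`-best-OWA-Winner with
approval utilities: every size-`K` set `W ⊆ V` has utility
`(K−1)·n + #{e ∈ E : e ∩ W ≠ ∅}`; consequently the maximum utility over size-`K`
sets equals `K·n` iff `G` has a vertex cover of size at most `K`. -/
theorem stmt_7 {V : Type*} [Fintype V] [DecidableEq V]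
    (G : SimpleGraph V) [DecidableRel G.Adj]
    (m n K : ℕ) (hm : Fintype.card V = m) (hn : G.edgeFinset.card = n)
    (hK : 3 ≤ K) (hKm : K ≤ m - 1)
    (hne : ((Finset.univ : Finset V).powersetCard K).Nonempty) :
    (∀ W : Finset V, W.card = K →
      stmt7util G K W =
        ((K : ℝ) - 1) * (n : ℝ) +
          ((G.edgeFinset.filter (fun e => ∃ v ∈ W, v ∈ e)).card : ℝ)) ∧
    ((((Finset.univ : Finset V).powersetCard K).sup' hne (stmt7util G K) =
        (K : ℝ) * (n : ℝ)) ↔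
      ∃ C : Finset V, C.card ≤ K ∧ ∀ e ∈ G.edgeFinset, ∃ v ∈ C, v ∈ e) :=
  stmt_7_general G n K hn hK hne
end

section
/- Let G = (V, E) be a graph with |V| = m and |E| = n, and let K be an integer with 3 ≤ K ≤ m. Set x = 4n(m+2)(K+4). Form an item set A' = V ∪ {d_1, d_2} ∪ H with H = {h_1, …, h_x}, so |A'| = m+x+2, and for each edge e = {v, v'} ∈ E introduce two agents e^1 and e^2 with Borda-based utilities derived from the following linear orders (blocks listed from most to least preferred, with an arbitrary fixed order inside each block): e^1 ranks d_1, then d_2, then V ∖ {v, v'}, then H, then {v, v'}; e^2 ranks d_1, then d_2, then {v, v'}, then H, then V ∖ {v, v'}. Use the (K+1)-best OWA of length K+2. Then, for every choice of the within-block orders, the following are equivalent: (i) G has a vertex cover of size at most K; (ii) there exists a set W with {d_1, d_2} ⊆ W ⊆ V ∪ {d_1, d_2} and |W| = K+2 such that the sum, over the 2n edge-agents, of their (K+1)-best OWA utilities from W is at least n·x·(K+4). -/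
/-!
On a committee of size `K + 2`, the `(K+1)`-best OWA gives an agent its total utility minus its
worst one. For an edge `e`, every vertex lies above the filler block `H` in one of the two rankings
of `e` and below it in the other, so each vertex of the committee is worth about `x` to the pair of
agents of `e`, and each of `d₁, d₂` about `2x`; the pair totals `x (K + 4)` up to an error `O(K m)`.
What decides is the worst item of the first agent: if the committee contains an endpoint of `e`,
that endpoint lies below `H` and costs at most `m + 1`, but if the committee misses `e`, all its
items lie above `H` and the first agent loses at least `x`. As `x` exceeds `n` times the error,
a single uncovered edge pushes the total below `n x (K + 4)`.
-/

open Finset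

open scoped Classical

lemma List.sum_range_getD_length {M : Type*} [AddCommMonoid M] (l : List M) :
    ∑ j ∈ Finset.range l.length, l.getD j 0 = l.sum := by
  induction l with
  | nil => simp
  | cons a t ih => rw [length_cons, Finset.sum_range_succ', sum_cons, ← ih, add_comm]; rfl

lemma owaUtil_eq_sum_sub_inf' {I A : Type*} [DecidableEq A] (N : Finset I) (u : I → A → ℝ)
    {k : ℕ} {W : Finset A} (hW : #W = k + 1) :
    owaUtil N u (k + 1) (fun j => if j < k then 1 else 0) W =
      ∑ i ∈ N, (∑ a ∈ W, u i a - W.inf' (card_pos.1 (by omega)) (u i)) := by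
  refine sum_congr rfl fun i _ => ?_
  set s := (W.1.map (u i)).sort (· ≤ ·) with hs
  have hlen : s.length = k + 1 := by rw [hs, Multiset.length_sort, Multiset.card_map]; exact hW
  -- `s` is ascending: its head is the worst utility, which the reversal puts at the one position
  -- of weight `0`.
  obtain ⟨a, r, hs'⟩ : ∃ a r, s = a :: r := List.exists_cons_of_length_eq_add_one hlen
  have hsum : ∑ a ∈ W, u i a = a + r.sum := by
    rw [← List.sum_cons, ← hs', ← Multiset.sum_coe, hs, Multiset.sort_eq]; rfl
  have hmin : W.inf' (card_pos.1 (by omega)) (u i) = a := by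
    have hmem : ∀ y, y ∈ W.1.map (u i) ↔ y = a ∨ y ∈ r := fun y => by
      rw [← Multiset.mem_sort (· ≤ ·), ← hs, hs', List.mem_cons]
    have hsorted : s.Pairwise (· ≤ ·) := Multiset.pairwise_sort _ _
    rw [hs'] at hsorted
    obtain ⟨b, hb, rfl⟩ := Multiset.mem_map.1 ((hmem a).2 (Or.inl rfl))
    refine le_antisymm (inf'_le _ hb) (le_inf' _ _ fun c hc => ?_)
    rcases (hmem (u i c)).1 (Multiset.mem_map_of_mem _ hc) with h | h
    · exact h.ge
    · exact List.rel_of_pairwise_cons hsorted h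
  have hr : r.reverse.length = k := by simpa [hs'] using hlen
  rw [hmin, hsum, hs', add_sub_cancel_left, ← List.sum_reverse, ← List.sum_range_getD_length, hr,
    sum_range_succ]
  simp only [lt_irrefl, if_false, zero_mul, add_zero]
  refine sum_congr rfl fun j hj => ?_
  have hj : j < r.reverse.length := hr ▸ mem_range.1 hj
  rw [if_pos (hr ▸ hj), one_mul, List.reverse_cons, List.getD_append _ _ _ _ hj]

section Borda

variable {α : Type*} {N : ℕ}

def bordaUtil (σ : α ≃ Fin N) (a : α) : ℝ := N - 1 - (σ a : ℕ)

lemma bordaUtil_nonneg (σ : α ≃ Fin N) (a : α) : 0 ≤ bordaUtil σ a := by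
  have : ((σ a : ℕ) : ℝ) + 1 ≤ N := by exact_mod_cast (σ a).isLt
  unfold bordaUtil
  linarith

lemma bordaUtil_le (σ : α ≃ Fin N) (a : α) : bordaUtil σ a ≤ N - 1 := by
  unfold bordaUtil
  linarith [(σ a : ℕ).cast_nonneg (α := ℝ)]

lemma card_le_bordaUtil {σ : α ≃ Fin N} {a : α} {T : Finset α} (h : ∀ t ∈ T, σ a < σ t) :
    (#T : ℝ) ≤ bordaUtil σ a := by
  have hsub : T.map σ.toEmbedding ⊆ Ioi (σ a) := by
    intro i hi
    obtain ⟨t, ht, rfl⟩ := mem_map.1 hi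
    exact mem_Ioi.2 (h t ht)
  have hcard := card_le_card hsub
  rw [card_map, Fin.card_Ioi] at hcard
  have : (#T : ℝ) + (σ a : ℕ) + 1 ≤ N := by
    exact_mod_cast (by have := (σ a).isLt; omega : #T + σ a + 1 ≤ N)
  unfold bordaUtil
  linarith

lemma bordaUtil_le_sub_card {σ : α ≃ Fin N} {a : α} {T : Finset α} (h : ∀ t ∈ T, σ t < σ a) :
    bordaUtil σ a ≤ N - 1 - #T := by
  have hsub : T.map σ.toEmbedding ⊆ Iio (σ a) := by
    intro i hi
    obtain ⟨t, ht, rfl⟩ := mem_map.1 hi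
    exact mem_Iio.2 (h t ht)
  have hcard := card_le_card hsub
  rw [card_map, Fin.card_Iio] at hcard
  have : (#T : ℝ) ≤ (σ a : ℕ) := by exact_mod_cast hcard
  unfold bordaUtil
  linarith

lemma sub_card_le_bordaUtil {σ : α ≃ Fin N} {a : α} {T : Finset α}
    (h : ∀ t, σ t < σ a → t ∈ T) : N - 1 - #T ≤ bordaUtil σ a := by
  have hsub : (Iio (σ a)).map σ.symm.toEmbedding ⊆ T := by
    intro t ht
    obtain ⟨i, hi, rfl⟩ := mem_map.1 ht
    exact h _ (by simpa using hi)
  have hcard := card_le_card hsub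
  rw [card_map, Fin.card_Iio] at hcard
  have : ((σ a : ℕ) : ℝ) ≤ #T := by exact_mod_cast hcard
  unfold bordaUtil
  linarith

end Borda

lemma exists_mem_notMem_sym2 {V : Type*} {S : Finset V} (hS : 2 < #S) (e : Sym2 V) :
    ∃ w ∈ S, w ∉ e := by
  induction e using Sym2.ind with
  | h a b =>
    obtain ⟨w, hw, hwab⟩ :=
      exists_mem_notMem_of_card_lt_card (hS.trans_le' (card_le_two (a := a) (b := b)))
    exact ⟨w, hw, by simpa using hwab⟩

section Reduction

variable {V : Type*} {x : ℕ}

abbrev dummy₁ : V ⊕ Fin 2 ⊕ Fin x := .inr (.inl 0)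

abbrev dummy₂ : V ⊕ Fin 2 ⊕ Fin x := .inr (.inl 1)

def filler : Finset (V ⊕ Fin 2 ⊕ Fin x) := univ.map (.trans .inr .inr)

@[simp]
lemma mem_filler {a : V ⊕ Fin 2 ⊕ Fin x} : a ∈ filler ↔ ∃ j, .inr (.inr j) = a := by
  simp [filler]

@[simp]
lemma card_filler : #(filler : Finset (V ⊕ Fin 2 ⊕ Fin x)) = x := by
  simp [filler]

section Committee

variable [DecidableEq V]

def committee (S : Finset V) : Finset (V ⊕ Fin 2 ⊕ Fin x) :=
  insert dummy₁ (insert dummy₂ (S.map .inl))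

lemma committee_nonempty (S : Finset V) : (committee (x := x) S).Nonempty :=
  ⟨_, mem_insert_self _ _⟩

lemma card_committee (S : Finset V) : #(committee (x := x) S) = #S + 2 := by
  simp [committee]

lemma sum_committee (S : Finset V) (f : V ⊕ Fin 2 ⊕ Fin x → ℝ) :
    ∑ a ∈ committee S, f a = f dummy₁ + f dummy₂ + ∑ v ∈ S, f (.inl v) := by
  simp [committee, add_assoc]

lemma eq_committee_toLeft {W : Finset (V ⊕ Fin 2 ⊕ Fin x)} (h₁ : dummy₁ ∈ W) (h₂ : dummy₂ ∈ W)
    (hH : ∀ j, .inr (.inr j) ∉ W) : W = committee W.toLeft := by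
  ext (v | b | j)
  · simp [committee]
  · fin_cases b <;> simpa [committee]
  · simpa [committee] using hH j

end Committee

/-- Each vertex is ranked above the block `H` of size `x` by one agent of `e` and below it by the
other, whence the bounds `x ≤ u` and `u ≤ (m + x + 2) - 1 - x = m + 1`; `d₁` and `d₂` are the top
two items of both agents. -/
structure EdgeBounds (m x : ℕ) (e : Sym2 V) (u : Fin 2 → V ⊕ Fin 2 ⊕ Fin x → ℝ) : Prop where
  nonneg : ∀ b a, 0 ≤ u b a
  le : ∀ b a, u b a ≤ m + x + 1
  le_dummy₁ : ∀ b, m + x ≤ u b dummy₁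
  le_dummy₂ : ∀ b, m + x ≤ u b dummy₂
  endpoint : ∀ v ∈ e, u 0 (.inl v) ≤ m + 1 ∧ x ≤ u 1 (.inl v)
  nonendpoint : ∀ v, v ∉ e → x ≤ u 0 (.inl v) ∧ u 1 (.inl v) ≤ m + 1

lemma EdgeBounds.of_rankings {m : ℕ} {e : Sym2 V}
    (σ : Fin 2 → (V ⊕ Fin 2 ⊕ Fin x) ≃ Fin (m + x + 2))
    (hx : 0 < x) (hw : ∃ w, w ∉ e)
    (hd : ∀ b, σ b dummy₁ < σ b dummy₂)
    (h01 : ∀ v, v ∉ e → σ 0 dummy₂ < σ 0 (.inl v))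
    (h02 : ∀ v, v ∉ e → ∀ j, σ 0 (.inl v) < σ 0 (.inr (.inr j)))
    (h03 : ∀ j, ∀ v ∈ e, σ 0 (.inr (.inr j)) < σ 0 (.inl v))
    (h11 : ∀ v ∈ e, σ 1 dummy₂ < σ 1 (.inl v))
    (h12 : ∀ v ∈ e, ∀ j, σ 1 (.inl v) < σ 1 (.inr (.inr j)))
    (h13 : ∀ j, ∀ v, v ∉ e → σ 1 (.inr (.inr j)) < σ 1 (.inl v)) :
    EdgeBounds m x e (fun b => bordaUtil (σ b)) := by
  obtain ⟨w, hw⟩ := hw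
  have hv : e.out.1 ∈ e := e.out_fst_mem
  set j₀ : Fin x := ⟨0, hx⟩
  -- Where the rankings do not compare `d₂` with an item directly, chain through a vertex or `H`.
  have hsecond : ∀ b t, σ b t < σ b dummy₂ → t ∈ ({dummy₁} : Finset _) := by
    intro b t ht
    by_contra hne
    refine (lt_asymm ht ?_)
    rcases t with v | c | j
    · fin_cases b
      · by_cases hve : v ∈ e
        · exact (h01 w hw).trans ((h02 w hw j₀).trans (h03 j₀ v hve))
        · exact h01 v hve
      · by_cases hve : v ∈ e
        · exact h11 v hve
        · exact (h11 _ hv).trans ((h12 _ hv j₀).trans (h13 j₀ v hve))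
    · fin_cases c
      · simp at hne
      · exact absurd ht (lt_irrefl _)
    · fin_cases b
      · exact (h01 w hw).trans (h02 w hw j)
      · exact (h11 _ hv).trans (h12 _ hv j)
  have hsub_one :
      ((m + x + 2 : ℕ) : ℝ) - 1 - #({dummy₁} : Finset (V ⊕ Fin 2 ⊕ Fin x)) = m + x := by
    rw [card_singleton]; push_cast; ring
  have habove : ∀ b a, (∀ j, σ b a < σ b (.inr (.inr j))) → (x : ℝ) ≤ bordaUtil (σ b) a := by
    intro b a h
    simpa using card_le_bordaUtil (T := filler) (σ := σ b) (by simpa using h)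
  have hbelow : ∀ b a, (∀ j, σ b (.inr (.inr j)) < σ b a) → bordaUtil (σ b) a ≤ m + 1 := by
    intro b a h
    have := bordaUtil_le_sub_card (T := filler) (σ := σ b) (by simpa using h)
    rw [card_filler] at this
    push_cast at this
    linarith
  refine ⟨fun b a => bordaUtil_nonneg _ _, fun b a => ?_, fun b => ?_, fun b => ?_,
    fun v hv => ⟨hbelow 0 _ (h03 · v hv), habove 1 _ (h12 v hv)⟩,
    fun v hv => ⟨habove 0 _ (h02 v hv), hbelow 1 _ (h13 · v hv)⟩⟩
  · have := bordaUtil_le (σ b) a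
    push_cast at this
    linarith
  · exact hsub_one ▸ sub_card_le_bordaUtil fun t ht => hsecond b t (ht.trans (hd b))
  · exact hsub_one ▸ sub_card_le_bordaUtil (hsecond b)

section Score

variable [DecidableEq V]

noncomputable def edgeScore (u : Fin 2 → V ⊕ Fin 2 ⊕ Fin x → ℝ) (S : Finset V) : ℝ :=
  ∑ b, (∑ a ∈ committee S, u b a - (committee S).inf' (committee_nonempty S) (u b))

lemma owaUtil_committee {I : Type*} (E : Finset I) (u : I × Fin 2 → V ⊕ Fin 2 ⊕ Fin x → ℝ)
    {K : ℕ} {S : Finset V} (hS : #S = K) :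
    owaUtil (E ×ˢ univ) u (K + 2) (fun j => if j < K + 1 then 1 else 0) (committee S) =
      ∑ e ∈ E, edgeScore (fun b => u (e, b)) S := by
  rw [owaUtil_eq_sum_sub_inf' _ _ (k := K + 1) (by rw [card_committee, hS]), sum_product]
  rfl

namespace EdgeBounds

variable {m K : ℕ} {e : Sym2 V} {u : Fin 2 → V ⊕ Fin 2 ⊕ Fin x → ℝ} {S : Finset V}

lemma vertex_sum_mem_Icc (hB : EdgeBounds m x e u) (v : V) :
    u 0 (.inl v) + u 1 (.inl v) ∈ Set.Icc (x : ℝ) (x + 2 * m + 2) := by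
  have := hB.nonneg 0 (.inl v)
  have := hB.nonneg 1 (.inl v)
  have := hB.le 0 (.inl v)
  have := hB.le 1 (.inl v)
  by_cases hv : v ∈ e
  · have := hB.endpoint v hv
    constructor <;> linarith
  · have := hB.nonendpoint v hv
    constructor <;> linarith

lemma sum_committee_mem_Icc (hB : EdgeBounds m x e u) (hS : #S = K) :
    ∑ b, ∑ a ∈ committee S, u b a ∈
      Set.Icc (4 * (m + x) + K * x : ℝ) (4 * (m + x + 1) + K * (x + 2 * m + 2)) := by
  have hK : (#S : ℝ) = K := by exact_mod_cast hS
  have hlow := card_nsmul_le_sum S _ _ fun v _ => (hB.vertex_sum_mem_Icc v).1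
  have hup := sum_le_card_nsmul S _ _ fun v _ => (hB.vertex_sum_mem_Icc v).2
  rw [nsmul_eq_mul, hK, sum_add_distrib] at hlow hup
  rw [Fin.sum_univ_two, sum_committee, sum_committee]
  have := hB.le 0 dummy₁
  have := hB.le 1 dummy₁
  have := hB.le 0 dummy₂
  have := hB.le 1 dummy₂
  have := hB.le_dummy₁ 0
  have := hB.le_dummy₁ 1
  have := hB.le_dummy₂ 0
  have := hB.le_dummy₂ 1
  constructor <;> linarith

lemma le_edgeScore (hB : EdgeBounds m x e u) (hS : #S = K) (hcov : ∃ v ∈ S, v ∈ e)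
    (hout : ∃ w ∈ S, w ∉ e) (hm : 1 ≤ m) : x * (K + 4) ≤ edgeScore u S := by
  obtain ⟨v, hvS, hve⟩ := hcov
  obtain ⟨w, hwS, hwe⟩ := hout
  have hmem : ∀ z ∈ S, (.inl z : V ⊕ Fin 2 ⊕ Fin x) ∈ committee S := by simp [committee]
  have h₀ := (inf'_le (u 0) (hmem v hvS)).trans (hB.endpoint v hve).1
  have h₁ := (inf'_le (u 1) (hmem w hwS)).trans (hB.nonendpoint w hwe).2
  have hm : (1 : ℝ) ≤ m := by exact_mod_cast hm
  have hsum := (hB.sum_committee_mem_Icc hS).1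
  rw [Fin.sum_univ_two] at hsum
  rw [edgeScore, Fin.sum_univ_two]
  linarith

lemma edgeScore_le (hB : EdgeBounds m x e u) (hS : #S = K) :
    edgeScore u S ≤
      x * (K + 4) + 2 * (K + 2) * (m + 1) - (committee S).inf' (committee_nonempty S) (u 0) := by
  have h₁ := le_inf' (committee_nonempty S) (u 1) fun a _ => hB.nonneg 1 a
  have hsum := (hB.sum_committee_mem_Icc hS).2
  rw [edgeScore, Fin.sum_univ_two]
  rw [Fin.sum_univ_two] at hsum
  linarith

lemma le_inf'_of_forall_notMem (hB : EdgeBounds m x e u) (hS : ∀ v ∈ S, v ∉ e) :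
    x ≤ (committee S).inf' (committee_nonempty S) (u 0) := by
  refine le_inf' _ _ fun a ha => ?_
  simp only [committee, mem_insert, mem_map] at ha
  rcases ha with rfl | rfl | ⟨v, hv, rfl⟩
  · linarith [hB.le_dummy₁ 0, Nat.cast_nonneg (α := ℝ) m]
  · linarith [hB.le_dummy₂ 0, Nat.cast_nonneg (α := ℝ) m]
  · exact (hB.nonendpoint v (hS v hv)).1

end EdgeBounds

variable {m K : ℕ} {E : Finset (Sym2 V)} {u : Sym2 V × Fin 2 → V ⊕ Fin 2 ⊕ Fin x → ℝ}
  {S : Finset V}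

lemma le_owaUtil_committee (hB : ∀ e ∈ E, EdgeBounds m x e fun b => u (e, b)) (hS : #S = K)
    (hcov : ∀ e ∈ E, ∃ v ∈ S, v ∈ e) (hout : ∀ e ∈ E, ∃ w ∈ S, w ∉ e) (hm : 1 ≤ m) :
    (#E : ℝ) * x * (K + 4) ≤
      owaUtil (E ×ˢ univ) u (K + 2) (fun j => if j < K + 1 then 1 else 0) (committee S) := by
  rw [owaUtil_committee _ _ hS, mul_assoc, ← nsmul_eq_mul]
  exact card_nsmul_le_sum _ _ _ fun e he => (hB e he).le_edgeScore hS (hcov e he) (hout e he) hm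

lemma owaUtil_committee_lt (hB : ∀ e ∈ E, EdgeBounds m x e fun b => u (e, b)) (hS : #S = K)
    (hx : #E * (2 * (K + 2) * (m + 1)) < x) {e : Sym2 V} (he : e ∈ E) (hunc : ∀ v ∈ S, v ∉ e) :
    owaUtil (E ×ˢ univ) u (K + 2) (fun j => if j < K + 1 then 1 else 0) (committee S) <
      #E * x * (K + 4) := by
  set worst : Sym2 V → ℝ := fun e => (committee S).inf' (committee_nonempty S) (u (e, 0))
  have hle : ∑ e ∈ E, edgeScore (fun b => u (e, b)) S ≤
      ∑ e ∈ E, (x * (K + 4) + 2 * (K + 2) * (m + 1) - worst e) :=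
    sum_le_sum fun e he => (hB e he).edgeScore_le hS
  have hworst : (x : ℝ) ≤ ∑ e ∈ E, worst e :=
    ((hB e he).le_inf'_of_forall_notMem hunc).trans <| single_le_sum
      (fun e he => le_inf' _ _ fun a _ => (hB e he).nonneg 0 a) he
  have hx : (#E : ℝ) * (2 * (K + 2) * (m + 1)) < x := by exact_mod_cast hx
  rw [sum_sub_distrib, sum_const, nsmul_eq_mul] at hle
  rw [owaUtil_committee _ _ hS]
  linarith

end Score

end Reduction

/-- Correctness of the reduction used for NP-hardness of `(K−1)`-best-OWA-Winner with
Borda utilities. Items are `A' = V ⊕ {d₁, d₂} ⊕ H` with `|H| = x = 4n(m+2)(K+4)`;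
for each edge `e = {v, v'}` there are two agents `(e, 0)` and `(e, 1)` whose Borda
utilities come from rankings `ρ` (0-indexed positions, utility `= |A'| − 1 − position`)
respecting the block structure: agent `(e,0)` ranks `d₁`, then `d₂`, then `V ∖ {v,v'}`,
then `H`, then `{v,v'}`; agent `(e,1)` ranks `d₁`, then `d₂`, then `{v,v'}`, then `H`,
then `V ∖ {v,v'}`. With the `(K+1)`-best OWA of length `K+2`, the graph `G` has a
vertex cover of size at most `K` iff there is a set `W` with `{d₁,d₂} ⊆ W ⊆ V ∪ {d₁,d₂}`
and `|W| = K + 2` whose total utility over the `2n` edge-agents is at least `n·x·(K+4)`. -/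
theorem stmt_8 {V : Type*} [Fintype V] [DecidableEq V]
    (G : SimpleGraph V) [DecidableRel G.Adj]
    (m n K : ℕ) (hm : Fintype.card V = m) (hn : G.edgeFinset.card = n)
    (hK : 3 ≤ K) (hKm : K ≤ m)
    (x : ℕ) (hx : x = 4 * n * (m + 2) * (K + 4))
    (ρ : Sym2 V × Fin 2 → (V ⊕ Fin 2 ⊕ Fin x) ≃ Fin (m + x + 2))
    -- every edge-agent ranks `d₁` before `d₂`
    (hd : ∀ e ∈ G.edgeFinset, ∀ b : Fin 2,
      ρ (e, b) (Sum.inr (Sum.inl 0)) < ρ (e, b) (Sum.inr (Sum.inl 1)))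
    -- agent `(e, 0)`: `d₂` before all non-endpoints
    (h01 : ∀ e ∈ G.edgeFinset, ∀ v : V, v ∉ e →
      ρ (e, 0) (Sum.inr (Sum.inl 1)) < ρ (e, 0) (Sum.inl v))
    -- agent `(e, 0)`: all non-endpoints before all of `H`
    (h02 : ∀ e ∈ G.edgeFinset, ∀ v : V, v ∉ e → ∀ j : Fin x,
      ρ (e, 0) (Sum.inl v) < ρ (e, 0) (Sum.inr (Sum.inr j)))
    -- agent `(e, 0)`: all of `H` before the endpoints
    (h03 : ∀ e ∈ G.edgeFinset, ∀ j : Fin x, ∀ v ∈ e,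
      ρ (e, 0) (Sum.inr (Sum.inr j)) < ρ (e, 0) (Sum.inl v))
    -- agent `(e, 1)`: `d₂` before the endpoints
    (h11 : ∀ e ∈ G.edgeFinset, ∀ v ∈ e,
      ρ (e, 1) (Sum.inr (Sum.inl 1)) < ρ (e, 1) (Sum.inl v))
    -- agent `(e, 1)`: the endpoints before all of `H`
    (h12 : ∀ e ∈ G.edgeFinset, ∀ v ∈ e, ∀ j : Fin x,
      ρ (e, 1) (Sum.inl v) < ρ (e, 1) (Sum.inr (Sum.inr j)))
    -- agent `(e, 1)`: all of `H` before all non-endpoints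
    (h13 : ∀ e ∈ G.edgeFinset, ∀ j : Fin x, ∀ v : V, v ∉ e →
      ρ (e, 1) (Sum.inr (Sum.inr j)) < ρ (e, 1) (Sum.inl v)) :
    (∃ C : Finset V, C.card ≤ K ∧ ∀ e ∈ G.edgeFinset, ∃ v ∈ C, v ∈ e) ↔
    (∃ W : Finset (V ⊕ Fin 2 ⊕ Fin x),
      Sum.inr (Sum.inl 0) ∈ W ∧ Sum.inr (Sum.inl 1) ∈ W ∧
      (∀ j : Fin x, Sum.inr (Sum.inr j) ∉ W) ∧
      W.card = K + 2 ∧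
      (n : ℝ) * (x : ℝ) * ((K : ℝ) + 4) ≤
        owaUtil (G.edgeFinset ×ˢ (Finset.univ : Finset (Fin 2)))
          (fun q a => ((m + x + 2 : ℕ) : ℝ) - 1 - ((ρ q a : ℕ) : ℝ))
          (K + 2) (fun j => if j < K + 1 then (1 : ℝ) else 0) W) := by
  subst hn
  have hpos : ∀ e ∈ G.edgeFinset, 0 < #G.edgeFinset := fun e he => card_pos.2 ⟨e, he⟩
  have hout : ∀ S : Finset V, K ≤ #S → ∀ e : Sym2 V, ∃ w ∈ S, w ∉ e :=
    fun S hS => exists_mem_notMem_sym2 (by omega)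
  have hB : ∀ e ∈ G.edgeFinset, EdgeBounds m x e fun b => bordaUtil (ρ (e, b)) := fun e he =>
    .of_rankings _ (by have := hpos e he; subst hx; positivity)
      (let ⟨w, _, hw⟩ := hout univ (by rw [card_univ]; omega) e; ⟨w, hw⟩)
      (hd e he) (h01 e he) (h02 e he) (h03 e he) (h11 e he) (h12 e he) (h13 e he)
  constructor
  · rintro ⟨C, hC, hcov⟩
    obtain ⟨S, hCS, hS⟩ := exists_superset_card_eq hC (hm ▸ hKm)
    refine ⟨committee S, by simp [committee], by simp [committee], by simp [committee],
      by rw [card_committee, hS], ?_⟩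
    refine le_owaUtil_committee hB hS (fun e he => ?_) (fun e _ => hout S hS.ge e) (by omega)
    obtain ⟨v, hv, hve⟩ := hcov e he
    exact ⟨v, hCS hv, hve⟩
  · rintro ⟨W, h₁, h₂, hH, hW, hval⟩
    rw [eq_committee_toLeft h₁ h₂ hH] at hW hval
    have hS : #W.toLeft = K := by rw [card_committee] at hW; omega
    refine ⟨W.toLeft, hS.le, ?_⟩
    by_contra! ⟨e, he, hunc⟩
    refine (owaUtil_committee_lt hB hS ?_ he hunc).not_ge hval
    have hc : 2 * (K + 2) * (m + 1) < 4 * (m + 2) * (K + 4) := by nlinarith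
    calc _ < #G.edgeFinset * (4 * (m + 2) * (K + 4)) := Nat.mul_lt_mul_of_pos_left hc (hpos e he)
      _ = x := by rw [hx]; ring
end

section
/- Fix an integer k ≥ 1. Let N be a finite set of agents, A a finite set of items with K ≤ |A|, u_{i,a} ≥ 0 utilities, and let b_1, …, b_{k−1} be k−1 additional items such that u_{i,b_j} ≥ u_{i,a} for every agent i, every j ∈ {1,…,k−1}, and every a ∈ A. Let A' = A ∪ {b_1, …, b_{k−1}}. Then: (i) max over W' ⊆ A' with |W'| = K+k−1 of u^{k-best}(W') (with the k-best OWA of length K+k−1) equals Σ_{i∈N} Σ_{j=1}^{k−1} u_{i,b_j} + max over W ⊆ A with |W| = K of u^{1-best}(W); and (ii) max over W' ⊆ A' with |W'| = K+k−1 of u^{k-med}(W') (with the k-median OWA of length K+k−1) equals max over W ⊆ A with |W| = K of u^{1-best}(W). -/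
/-
Put `B = {b₁, …, b_{k−1}}`. Every agent ranks all of `B` above every item of `A`, so for
`W ⊆ A` the utilities of `W ∪ B` sorted in nonincreasing order are those of `B` followed by
those of `W`: the `k`-best OWA of `W ∪ B` is `∑_{x ∈ B} u_{i,x}` plus the top utility of `W`, and
the `k`-median OWA of `W ∪ B` is the top utility of `W`. Conversely, any committee `W' ⊆ A ∪ B`
of size `K + k − 1` can be turned into one of the form `W ∪ B` by repeatedly exchanging an item
of `A` for a missing item of `B`; this raises every agent's multiset of utilities pointwise,
hence each of its order statistics, hence any OWA utility with nonnegative weights.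
-/

open Finset

namespace List

section LinearOrder
variable {α : Type*} [LinearOrder α] {l l' : List α} {j : ℕ}

lemma lt_countP_le_getElem (hl : l.SortedGE) (hj : j < l.length) :
    j < l.countP (fun x => l[j] ≤ x) := by
  have htake : ∀ x ∈ l.take (j + 1), l[j] ≤ x := by
    intro x hx
    obtain ⟨i, hi, rfl⟩ := List.getElem_of_mem hx
    rw [List.getElem_take]
    exact hl.getElem_ge_getElem_of_le (by simp at hi; omega)
  have hall := List.countP_eq_length (p := fun x => decide (l[j] ≤ x)) |>.mpr (by simpa using htake)
  have hsub := (List.take_sublist (j + 1) l).countP_le (p := fun x => decide (l[j] ≤ x))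
  have hlen : (l.take (j + 1)).length = j + 1 := by simp [hj]
  omega

lemma countP_le_of_getElem_lt (hl : l.SortedGE) (hj : j < l.length) {t : α} (ht : l[j] < t) :
    l.countP (fun x => t ≤ x) ≤ j := by
  have hdrop : (l.drop j).countP (fun x => t ≤ x) = 0 := by
    refine List.countP_eq_zero.mpr fun x hx => ?_
    obtain ⟨i, hi, rfl⟩ := List.getElem_of_mem hx
    rw [List.getElem_drop]
    simpa using (hl.getElem_ge_getElem_of_le (Nat.le_add_right j i)).trans_lt ht
  rw [← List.take_append_drop j l, List.countP_append, hdrop, add_zero]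
  exact List.countP_le_length.trans (List.length_take_le _ _)

lemma getD_le_getD_of_countP_le (hl : l.SortedGE) (hl' : l'.SortedGE)
    (hlen : l.length = l'.length)
    (hcount : ∀ t, l.countP (fun x => t ≤ x) ≤ l'.countP (fun x => t ≤ x)) (j : ℕ) (d : α) :
    l.getD j d ≤ l'.getD j d := by
  rcases lt_or_ge j l.length with hj | hj
  · have hj' : j < l'.length := hlen ▸ hj
    rw [List.getD_eq_getElem _ _ hj, List.getD_eq_getElem _ _ hj']
    by_contra! hlt
    have := (lt_countP_le_getElem hl hj).trans_le
      ((hcount _).trans (countP_le_of_getElem_lt hl' hj' hlt))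
    exact lt_irrefl _ this
  · rw [List.getD_eq_default _ _ hj, List.getD_eq_default _ _ (hlen ▸ hj)]

end LinearOrder

section Semiring
variable {R : Type*} [NonAssocSemiring R] {L : List R} {M : ℕ}

lemma sum_range_ite_eq_mul_getD (hL : L.length ≤ M) (t : ℕ) :
    ∑ j ∈ Finset.range M, (if j = t then (1 : R) else 0) * L.getD j 0 = L.getD t 0 := by
  simp only [ite_mul, one_mul, zero_mul, Finset.sum_ite_eq', Finset.mem_range]
  split_ifs with ht
  · rfl
  · exact (List.getD_eq_default _ _ (by omega)).symm

lemma sum_range_ite_lt_mul_getD (hL : L.length ≤ M) (k : ℕ) :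
    ∑ j ∈ Finset.range M, (if j < k then (1 : R) else 0) * L.getD j 0 =
      ∑ j ∈ Finset.range k, L.getD j 0 := by
  calc ∑ j ∈ Finset.range M, (if j < k then (1 : R) else 0) * L.getD j 0
      = ∑ j ∈ Finset.range (max M k), (if j < k then (1 : R) else 0) * L.getD j 0 :=
        Finset.sum_subset (Finset.range_subset_range.mpr (le_max_left M k)) fun j _ hj => by
          rw [List.getD_eq_default _ _ (by simp at hj; omega), mul_zero]
    _ = ∑ j ∈ Finset.range k, (if j < k then (1 : R) else 0) * L.getD j 0 :=
        (Finset.sum_subset (Finset.range_subset_range.mpr (le_max_right M k)) fun j _ hj => by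
          simp_all).symm
    _ = ∑ j ∈ Finset.range k, L.getD j 0 := Finset.sum_congr rfl fun j hj => by simp_all

lemma sum_range_getD_append (L₁ L₂ : List R) :
    ∑ j ∈ Finset.range (L₁.length + 1), (L₁ ++ L₂).getD j 0 = L₁.sum + L₂.getD 0 0 := by
  induction L₁ with
  | nil => simp
  | cons x L₁ ih =>
    rw [List.length_cons, Finset.sum_range_succ']
    simp only [List.cons_append, List.getD_cons_succ, List.getD_cons_zero, ih, List.sum_cons]
    abel

end Semiring

end List

namespace Finset
variable {X α : Type*} [LinearOrder α]

def sortedDesc (f : X → α) (W : Finset X) : List α := ((W.1.map f).sort (· ≤ ·)).reverse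

variable (f : X → α) (W : Finset X)

lemma sortedGE_sortedDesc : (W.sortedDesc f).SortedGE :=
  (Multiset.pairwise_sort _ _).sortedLE.reverse

lemma coe_sortedDesc : ((W.sortedDesc f : List α) : Multiset α) = W.1.map f := by
  rw [sortedDesc, Multiset.coe_reverse, Multiset.sort_eq]

lemma length_sortedDesc : (W.sortedDesc f).length = #W := by
  rw [sortedDesc, List.length_reverse, Multiset.length_sort, Multiset.card_map, card_val]

lemma countP_sortedDesc (p : α → Prop) [DecidablePred p] :
    (W.sortedDesc f).countP (fun x => p x) = (W.1.map f).countP p := by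
  rw [← coe_sortedDesc, Multiset.coe_countP]

lemma sum_sortedDesc {α : Type*} [LinearOrder α] [AddCommMonoid α] (f : X → α) (W : Finset X) :
    (W.sortedDesc f).sum = ∑ x ∈ W, f x := by
  rw [← Multiset.sum_coe, coe_sortedDesc]; rfl

variable [DecidableEq X]

lemma sortedDesc_union {W B : Finset X} (hWB : Disjoint W B) (h : ∀ x ∈ B, ∀ y ∈ W, f y ≤ f x) :
    (W ∪ B).sortedDesc f = B.sortedDesc f ++ W.sortedDesc f := by
  refine List.Perm.eq_of_sortedGE (sortedGE_sortedDesc f _) ?_ ?_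
  · refine List.sortedGE_iff_pairwise.mpr (List.pairwise_append.mpr
      ⟨(sortedGE_sortedDesc f B).pairwise, (sortedGE_sortedDesc f W).pairwise, ?_⟩)
    intro x hx y hy
    rw [← Multiset.mem_coe, coe_sortedDesc, Multiset.mem_map] at hx hy
    obtain ⟨x, hx, rfl⟩ := hx
    obtain ⟨y, hy, rfl⟩ := hy
    exact h x hx y hy
  · rw [← Multiset.coe_eq_coe, ← Multiset.coe_add, coe_sortedDesc, coe_sortedDesc,
      coe_sortedDesc, ← Multiset.map_add, ← disjUnion_eq_union W B hWB, disjUnion_val, add_comm]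

lemma getD_sortedDesc_le_insert_erase {a c : X} (ha : a ∈ W) (hc : c ∉ W) (hac : f a ≤ f c)
    (j : ℕ) (d : α) :
    (W.sortedDesc f).getD j d ≤ ((insert c (W.erase a)).sortedDesc f).getD j d := by
  have hW : W.1.map f = f a ::ₘ (W.erase a).1.map f := by
    rw [erase_val, ← Multiset.map_cons, Multiset.cons_erase (mem_val.mpr ha)]
  have hW' : (insert c (W.erase a)).1.map f = f c ::ₘ (W.erase a).1.map f := by
    rw [insert_val_of_notMem (fun h => hc (mem_of_mem_erase h)), Multiset.map_cons]
  refine List.getD_le_getD_of_countP_le (sortedGE_sortedDesc f _) (sortedGE_sortedDesc f _)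
    ?_ (fun t => ?_) j d
  · rw [length_sortedDesc, length_sortedDesc, card_insert_of_notMem
      (fun h => hc (mem_of_mem_erase h)), card_erase_add_one ha]
  · rw [countP_sortedDesc, countP_sortedDesc, hW, hW', Multiset.countP_cons,
      Multiset.countP_cons]
    gcongr
    split_ifs <;> grind

end Finset

section owaUtil
variable {I X : Type*} [DecidableEq X] (N : Finset I) (u : I → X → ℝ)

lemma owaUtil_eq (M : ℕ) (α : ℕ → ℝ) (W : Finset X) :
    owaUtil N u M α W = ∑ i ∈ N, ∑ j ∈ range M, α j * (W.sortedDesc (u i)).getD j 0 := rfl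

lemma owaUtil_le_owaUtil_insert_erase {M : ℕ} {α : ℕ → ℝ} (hα : ∀ j, 0 ≤ α j) {W : Finset X}
    {a c : X} (ha : a ∈ W) (hc : c ∉ W) (hac : ∀ i ∈ N, u i a ≤ u i c) :
    owaUtil N u M α W ≤ owaUtil N u M α (insert c (W.erase a)) := by
  rw [owaUtil_eq, owaUtil_eq]
  gcongr with i hi j
  · exact hα j
  · exact W.getD_sortedDesc_le_insert_erase (u i) ha hc (hac i hi) j 0

variable {N u} {M : ℕ} {W : Finset X}

lemma owaUtil_kMed (hW : #W ≤ M) (t : ℕ) :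
    owaUtil N u M (fun j => if j = t then 1 else 0) W = ∑ i ∈ N, (W.sortedDesc (u i)).getD t 0 :=
  Finset.sum_congr rfl fun i _ =>
    List.sum_range_ite_eq_mul_getD ((W.length_sortedDesc (u i)).trans_le hW) t

lemma owaUtil_kBest (hW : #W ≤ M) (k : ℕ) :
    owaUtil N u M (fun j => if j < k then 1 else 0) W =
      ∑ i ∈ N, ∑ j ∈ range k, (W.sortedDesc (u i)).getD j 0 :=
  Finset.sum_congr rfl fun i _ =>
    List.sum_range_ite_lt_mul_getD ((W.length_sortedDesc (u i)).trans_le hW) k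

variable {B : Finset X} {K : ℕ}

lemma owaUtil_kBest_union (hWB : Disjoint W B) (hBW : ∀ i ∈ N, ∀ x ∈ B, ∀ y ∈ W, u i y ≤ u i x)
    (hM : #W + #B ≤ M) (hK : #W ≤ K) {k : ℕ} (hk : #B + 1 = k) :
    owaUtil N u M (fun j => if j < k then 1 else 0) (W ∪ B) =
      ∑ i ∈ N, ∑ x ∈ B, u i x + owaUtil N u K (fun j => if j = 0 then 1 else 0) W := by
  rw [owaUtil_kBest (by rwa [card_union_of_disjoint hWB]), owaUtil_kMed hK, ← sum_add_distrib]
  refine Finset.sum_congr rfl fun i hi => ?_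
  rw [sortedDesc_union _ hWB (hBW i hi), ← hk, ← B.length_sortedDesc (u i),
    List.sum_range_getD_append, sum_sortedDesc]

lemma owaUtil_kMed_union (hWB : Disjoint W B) (hBW : ∀ i ∈ N, ∀ x ∈ B, ∀ y ∈ W, u i y ≤ u i x)
    (hM : #W + #B ≤ M) (hK : #W ≤ K) {t : ℕ} (ht : #B = t) :
    owaUtil N u M (fun j => if j = t then 1 else 0) (W ∪ B) =
      owaUtil N u K (fun j => if j = 0 then 1 else 0) W := by
  rw [owaUtil_kMed (by rwa [card_union_of_disjoint hWB]), owaUtil_kMed hK]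
  refine Finset.sum_congr rfl fun i hi => ?_
  rw [sortedDesc_union _ hWB (hBW i hi),
    List.getD_append_right _ _ _ _ (by rw [length_sortedDesc, ht]), length_sortedDesc, ht,
    Nat.sub_self]

end owaUtil

section Exchange
variable {X β : Type*} [DecidableEq X] [SemilatticeSup β] {f : Finset X → β} {A B : Finset X}

lemma exists_subset_le_union_of_exchange (hAB : Disjoint A B)
    (hf : ∀ W, ∀ a ∈ W, a ∈ A → ∀ c ∈ B, c ∉ W → f W ≤ f (insert c (W.erase a)))
    {K : ℕ} {W' : Finset X} (hW' : W' ⊆ A ∪ B)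
    (hcard : #W' = K + #B) : ∃ W ⊆ A, #W = K ∧ f W' ≤ f (W ∪ B) := by
  induction h : #(B \ W') generalizing W' with
  | zero =>
    have hBW' : B ⊆ W' := sdiff_eq_empty_iff_subset.mp (card_eq_zero.mp h)
    refine ⟨W' \ B, fun x hx => ?_, ?_, by rw [sdiff_union_of_subset hBW']⟩
    · grind
    · rw [card_sdiff_of_subset hBW', hcard, Nat.add_sub_cancel]
  | succ n ih =>
    obtain ⟨c, hc⟩ := card_pos.mp (by omega : 0 < #(B \ W'))
    obtain ⟨hcB, hcW'⟩ := mem_sdiff.mp hc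
    obtain ⟨a, haW', haA⟩ : ∃ a ∈ W', a ∈ A := by
      by_contra! hno
      have hsub : W' ⊆ B.erase c := fun x hx => mem_erase.mpr
        ⟨fun hxc => hcW' (hxc ▸ hx), (mem_union.mp (hW' hx)).resolve_left (hno x hx)⟩
      have := card_le_card hsub
      have := card_erase_add_one hcB
      omega
    have haB : a ∉ B := disjoint_left.mp hAB haA
    have hsdiff : B \ insert c (W'.erase a) = (B \ W').erase c := by
      ext x
      simp only [mem_sdiff, mem_insert, mem_erase]
      constructor
      · rintro ⟨hxB, hx⟩
        exact ⟨fun hxc => hx (Or.inl hxc), hxB,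
          fun hxW' => hx (Or.inr ⟨fun hxa => haB (hxa ▸ hxB), hxW'⟩)⟩
      · rintro ⟨hxc, hxB, hxW'⟩
        exact ⟨hxB, by rintro (hxc' | ⟨-, hxW''⟩) <;> contradiction⟩
    obtain ⟨W, hWA, hWK, hle⟩ := ih (insert_subset (mem_union_right _ hcB)
        ((erase_subset _ _).trans hW'))
      (by rw [card_insert_of_notMem (fun h => hcW' (mem_of_mem_erase h)),
        card_erase_add_one haW', hcard])
      (by rw [hsdiff, card_erase_of_mem hc, h, Nat.add_sub_cancel])
    exact ⟨W, hWA, hWK, (hf W' a haW' haA c hcB hcW').trans hle⟩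

lemma sup'_powersetCard_union_eq_of_exchange (hAB : Disjoint A B)
    (hf : ∀ W, ∀ a ∈ W, a ∈ A → ∀ c ∈ B, c ∉ W → f W ≤ f (insert c (W.erase a)))
    {K n : ℕ} (hn : n = K + #B)
    (h₁ : (A.powersetCard K).Nonempty) (h₂ : ((A ∪ B).powersetCard n).Nonempty) :
    ((A ∪ B).powersetCard n).sup' h₂ f = (A.powersetCard K).sup' h₁ (fun W => f (W ∪ B)) := by
  apply le_antisymm
  · refine sup'_le _ _ fun W' hW' => ?_
    rw [mem_powersetCard, hn] at hW'
    obtain ⟨W, hWA, hWK, hle⟩ := exists_subset_le_union_of_exchange hAB hf hW'.1 hW'.2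
    exact hle.trans (le_sup' (fun W => f (W ∪ B)) (mem_powersetCard.mpr ⟨hWA, hWK⟩))
  · refine sup'_le _ _ fun W hW => le_sup' f (mem_powersetCard.mpr ⟨?_, ?_⟩)
    · exact union_subset_union (mem_powersetCard.mp hW).1 subset_rfl
    · rw [card_union_of_disjoint (hAB.mono_left (mem_powersetCard.mp hW).1),
        (mem_powersetCard.mp hW).2, hn]

end Exchange

theorem stmt_9_general {I X : Type*} [DecidableEq X]
    (N : Finset I) (k : ℕ) (hk : 1 ≤ k)
    (A : Finset X) (K : ℕ)
    (u : I → X → ℝ)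
    (b : Fin (k - 1) → X) (hbinj : Function.Injective b)
    (hbA : ∀ j, b j ∉ A)
    (hbtop : ∀ i ∈ N, ∀ j : Fin (k - 1), ∀ a ∈ A, u i a ≤ u i (b j))
    (hne1 : (A.powersetCard K).Nonempty)
    (hne2 : ((A ∪ (Finset.univ : Finset (Fin (k - 1))).image b).powersetCard
      (K + k - 1)).Nonempty) :
    ((A ∪ (Finset.univ : Finset (Fin (k - 1))).image b).powersetCard (K + k - 1)).sup'
        hne2 (owaUtil N u (K + k - 1) (fun j => if j < k then (1 : ℝ) else 0)) =
      (∑ i ∈ N, ∑ j : Fin (k - 1), u i (b j)) +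
        (A.powersetCard K).sup' hne1
          (owaUtil N u K (fun j => if j = 0 then (1 : ℝ) else 0)) ∧
    ((A ∪ (Finset.univ : Finset (Fin (k - 1))).image b).powersetCard (K + k - 1)).sup'
        hne2 (owaUtil N u (K + k - 1) (fun j => if j = k - 1 then (1 : ℝ) else 0)) =
      (A.powersetCard K).sup' hne1
        (owaUtil N u K (fun j => if j = 0 then (1 : ℝ) else 0)) := by
  set B := (univ : Finset (Fin (k - 1))).image b
  have hB : #B = k - 1 := by rw [card_image_of_injective _ hbinj, card_univ, Fintype.card_fin]
  have hAB : Disjoint A B := disjoint_left.mpr fun x hxA hxB => by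
    obtain ⟨j, -, rfl⟩ := mem_image.mp hxB
    exact hbA j hxA
  have hBA : ∀ W ⊆ A, ∀ i ∈ N, ∀ x ∈ B, ∀ y ∈ W, u i y ≤ u i x := by
    rintro W hWA i hi x hx y hy
    obtain ⟨j, -, rfl⟩ := mem_image.mp hx
    exact hbtop i hi j y (hWA hy)
  have hexch : ∀ α : ℕ → ℝ, (∀ j, 0 ≤ α j) → ∀ W, ∀ a ∈ W, a ∈ A → ∀ c ∈ B, c ∉ W →
      owaUtil N u (K + k - 1) α W ≤ owaUtil N u (K + k - 1) α (insert c (W.erase a)) :=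
    fun α hα W a ha haA c hc hcW =>
      owaUtil_le_owaUtil_insert_erase N u hα ha hcW fun i hi => hBA A subset_rfl i hi c hc a haA
  have hn : K + k - 1 = K + #B := by omega
  constructor
  · rw [sup'_powersetCard_union_eq_of_exchange hAB (hexch _ fun j => by positivity) hn hne1,
      add_sup']
    refine sup'_congr _ rfl fun W hW => ?_
    obtain ⟨hWA, hWK⟩ := mem_powersetCard.mp hW
    rw [owaUtil_kBest_union (hAB.mono_left hWA) (hBA W hWA) (by omega) hWK.le (by omega)]
    congr 1
    exact sum_congr rfl fun i _ => sum_image fun x _ y _ h => hbinj h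
  · rw [sup'_powersetCard_union_eq_of_exchange hAB (hexch _ fun j => by positivity) hn hne1]
    refine sup'_congr _ rfl fun W hW => ?_
    obtain ⟨hWA, hWK⟩ := mem_powersetCard.mp hW
    exact owaUtil_kMed_union (hAB.mono_left hWA) (hBA W hWA) (by omega) hWK.le hB

/-- Correctness of the reduction from `1`-best-OWA-Winner to `k`-best- and
`k`-median-OWA-Winner: adding `k − 1` new items `b₁, …, b_{k−1}` that every agent
(weakly) prefers to all items of `A`, and enlarging the committee size from `K` to
`K + k − 1`, (i) the optimal `k`-best utility over size-`(K+k−1)` subsets of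
`A ∪ {b₁, …, b_{k−1}}` equals `∑_{i∈N} ∑_j u_{i,b_j}` plus the optimal `1`-best
utility over size-`K` subsets of `A`, and (ii) the optimal `k`-median utility over
size-`(K+k−1)` subsets of `A ∪ {b₁, …, b_{k−1}}` equals the optimal `1`-best utility
over size-`K` subsets of `A`. -/
theorem stmt_9 {I X : Type*} [DecidableEq X]
    (N : Finset I) (k : ℕ) (hk : 1 ≤ k)
    (A : Finset X) (K : ℕ) (hKA : K ≤ A.card)
    (u : I → X → ℝ) (hu : ∀ i a, 0 ≤ u i a)
    (b : Fin (k - 1) → X) (hbinj : Function.Injective b)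
    (hbA : ∀ j, b j ∉ A)
    (hbtop : ∀ i ∈ N, ∀ j : Fin (k - 1), ∀ a ∈ A, u i a ≤ u i (b j))
    (hne1 : (A.powersetCard K).Nonempty)
    (hne2 : ((A ∪ (Finset.univ : Finset (Fin (k - 1))).image b).powersetCard
      (K + k - 1)).Nonempty) :
    ((A ∪ (Finset.univ : Finset (Fin (k - 1))).image b).powersetCard (K + k - 1)).sup'
        hne2 (owaUtil N u (K + k - 1) (fun j => if j < k then (1 : ℝ) else 0)) =
      (∑ i ∈ N, ∑ j : Fin (k - 1), u i (b j)) +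
        (A.powersetCard K).sup' hne1
          (owaUtil N u K (fun j => if j = 0 then (1 : ℝ) else 0)) ∧
    ((A ∪ (Finset.univ : Finset (Fin (k - 1))).image b).powersetCard (K + k - 1)).sup'
        hne2 (owaUtil N u (K + k - 1) (fun j => if j = k - 1 then (1 : ℝ) else 0)) =
      (A.powersetCard K).sup' hne1
        (owaUtil N u K (fun j => if j = 0 then (1 : ℝ) else 0)) :=
  stmt_9_general N k hk A K u b hbinj hbA hbtop hne1 hne2
end

section
/- Fix integers ℓ ≥ 2 and K ≥ 1. Let G = (V, E) be a graph with K ≤ |V|, and let α = (α_1, …, α_{K+ℓ−2}) be a vector of nonnegative reals with α_1 = … = α_{ℓ−1} = 0 and α_ℓ > 0. Consider the OWA-Winner instance whose items are A' = V ∪ {d_1, …, d_{ℓ−2}}, whose agents are the edges of G, where agent e has utility 1 for each d_j and for each of the two endpoints of e and utility 0 otherwise, with committee size K+ℓ−2 and OWA α. Then: (i) for every S ⊆ V with |S| = K, u^α({d_1, …, d_{ℓ−2}} ∪ S) = α_ℓ · |{e ∈ E : both endpoints of e lie in S}|; and (ii) max over W ⊆ A' with |W| = K+ℓ−2 of u^α(W)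 equals α_ℓ times the maximum number of edges of a K-vertex induced subgraph of G. -/
/-!
Every utility is `0` or `1`, so an agent's OWA value is `α_1 + … + α_c`, where `c` is the number
of items of the committee it values. An edge sees at most its two endpoints and the `ℓ - 2`
dummies, so `c ≤ ℓ`, and since `α_1 = … = α_{ℓ-1} = 0` it contributes `α_ℓ` when `c = ℓ` and `0`
otherwise. A committee missing a dummy therefore has utility `0`; one containing all dummies is
`S ∪ {d_j}` with `|S| = K`, and its edges with `c = ℓ` are exactly those induced by `S`.
-/

open Finset

open scoped Classical

namespace Multiset

lemma eq_replicate_add_replicate_of_zero_one (m : Multiset ℝ) (h : ∀ x ∈ m, x = 0 ∨ x = 1) :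
    m = replicate (card m - count 1 m) 0 + replicate (count 1 m) 1 := by
  have hones : m.filter (· = 1) = replicate (count 1 m) 1 := filter_eq' m 1
  have hzeros : m.filter (fun x => ¬ x = 1) = replicate (card m - count 1 m) 0 := by
    refine eq_replicate.2 ⟨?_, fun x hx => ?_⟩
    · have := congrArg card (filter_add_not (· = 1) m)
      rw [card_add, hones, card_replicate] at this
      omega
    · obtain ⟨hxm, hx1⟩ := mem_filter.1 hx
      exact (h x hxm).resolve_right hx1
  rw [← hones, ← hzeros, add_comm]
  exact (filter_add_not (· = 1) m).symm

lemma getD_reverse_sort_of_zero_one (m : Multiset ℝ) (h : ∀ x ∈ m, x = 0 ∨ x = 1) (j : ℕ) :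
    (m.sort (· ≤ ·)).reverse.getD j 0 = if j < count 1 m then 1 else 0 := by
  have hsort : m.sort (· ≤ ·) =
      List.replicate (card m - count 1 m) 0 ++ List.replicate (count 1 m) 1 := by
    conv_lhs => rw [eq_replicate_add_replicate_of_zero_one m h]
    rw [← coe_replicate, ← coe_replicate, coe_add, coe_sort]
    refine List.mergeSort_eq_self _ (List.pairwise_append.2 ⟨?_, ?_, ?_⟩)
    · exact List.pairwise_replicate_of_refl
    · exact List.pairwise_replicate_of_refl
    · intro x hx y hy
      simp [List.eq_of_mem_replicate hx, List.eq_of_mem_replicate hy]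
  rw [hsort, List.reverse_append, List.reverse_replicate, List.reverse_replicate]
  split_ifs with hj
  · rw [List.getD_append _ _ _ _ (by simpa using hj)]
    simp [hj]
  · rw [List.getD_append_right _ _ _ _ (by simpa using hj)]
    rcases lt_or_ge (j - count 1 m) (card m - count 1 m) with h' | h' <;> simp [h']

end Multiset

lemma Finset.sum_range_mul_ite_lt (α : ℕ → ℝ) (K c : ℕ) :
    ∑ j ∈ range K, α j * (if j < c then 1 else 0) = ∑ j ∈ range (min c K), α j := by
  simp only [mul_ite, mul_one, mul_zero]
  rw [← sum_filter]
  congr 1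
  ext j
  simp only [mem_filter, mem_range]
  omega

lemma owaUtil_of_zero_one {I A : Type*} [DecidableEq A] (N : Finset I) (u : I → A → ℝ)
    (K : ℕ) (α : ℕ → ℝ) (W : Finset A) (hu : ∀ i ∈ N, ∀ a ∈ W, u i a = 0 ∨ u i a = 1) :
    owaUtil N u K α W = ∑ i ∈ N, ∑ j ∈ range (min (#{a ∈ W | u i a = 1}) K), α j := by
  refine sum_congr rfl fun i hi => ?_
  have hmem : ∀ x ∈ W.1.map (u i), x = 0 ∨ x = 1 := by
    simpa using hu i hi
  have hcount : (W.1.map (u i)).count 1 = #{a ∈ W | u i a = 1} := by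
    rw [Multiset.count_map, card, filter_val]
    simp only [eq_comm]
  simp only [Multiset.getD_reverse_sort_of_zero_one _ hmem, hcount, sum_range_mul_ite_lt]

lemma Finset.sum_range_eq_ite_of_eq_zero (α : ℕ → ℝ) {ℓ c : ℕ} (hℓ : 1 ≤ ℓ)
    (hα : ∀ j, j < ℓ - 1 → α j = 0) (hc : c ≤ ℓ) :
    ∑ j ∈ range c, α j = if c = ℓ then α (ℓ - 1) else 0 := by
  split_ifs with hcℓ
  · subst hcℓ
    obtain ⟨k, rfl⟩ := Nat.exists_eq_add_of_le' hℓ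
    rw [sum_range_succ, sum_eq_zero fun j hj => hα j (by simpa using hj)]
    simp
  · exact sum_eq_zero fun j hj => hα j (by simp at hj; omega)

namespace Sym2

variable {V : Type*} [DecidableEq V]

lemma card_filter_mem_le_two_s10 (S : Finset V) (e : Sym2 V) : #{v ∈ S | v ∈ e} ≤ 2 := by
  have : {v ∈ S | v ∈ e} ⊆ e.toFinset := fun v hv => mem_toFinset.2 (mem_filter.1 hv).2
  refine (card_le_card this).trans ?_
  by_cases he : e.IsDiag
  · simp [card_toFinset_of_isDiag e he]
  · simp [card_toFinset_of_not_isDiag e he]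

lemma card_filter_mem_eq_two_iff (S : Finset V) {e : Sym2 V} (he : ¬ e.IsDiag) :
    #{v ∈ S | v ∈ e} = 2 ↔ ∀ v ∈ e, v ∈ S := by
  have hfilter : {v ∈ S | v ∈ e} = S ∩ e.toFinset := by
    ext v; simp [mem_toFinset]
  have hsub : e.toFinset ⊆ S ↔ ∀ v ∈ e, v ∈ S := by
    simp only [subset_iff, mem_toFinset]
  rw [hfilter, ← card_toFinset_of_not_isDiag e he, ← hsub]
  refine ⟨fun h => inter_eq_right.1 (eq_of_subset_of_card_le inter_subset_right h.ge),
    fun h => by rw [inter_eq_right.2 h]⟩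

end Sym2

lemma Finset.image_inl_union_image_inr {α β : Type*} [DecidableEq α] [DecidableEq β]
    (s : Finset α) (t : Finset β) : s.image Sum.inl ∪ t.image Sum.inr = s.disjSum t := by
  ext (x | x) <;> simp

lemma Finset.sup'_eq_sup'_of_forall_exists_le {ι κ α : Type*} [SemilatticeSup α]
    {s : Finset ι} {t : Finset κ} (hs : s.Nonempty) (ht : t.Nonempty) {f : ι → α} {g : κ → α}
    (hfg : ∀ i ∈ s, ∃ j ∈ t, f i ≤ g j) (hgf : ∀ j ∈ t, ∃ i ∈ s, g j ≤ f i) :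
    s.sup' hs f = t.sup' ht g := by
  refine le_antisymm (sup'_le hs f fun i hi => ?_) (sup'_le ht g fun j hj => ?_)
  · obtain ⟨j, hj, hij⟩ := hfg i hi
    exact le_sup'_of_le g hj hij
  · obtain ⟨i, hi, hji⟩ := hgf j hj
    exact le_sup'_of_le f hi hji

section EdgeAgents

variable {V : Type*} [DecidableEq V]

noncomputable def edgeItemUtil (n : ℕ) (e : Sym2 V) (x : V ⊕ Fin n) : ℝ :=
  Sum.elim (fun v => if v ∈ e then (1 : ℝ) else 0) (fun _ => (1 : ℝ)) x

lemma edgeItemUtil_eq_zero_or_one (n : ℕ) (e : Sym2 V) (x : V ⊕ Fin n) :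
    edgeItemUtil n e x = 0 ∨ edgeItemUtil n e x = 1 := by
  rcases x with v | d
  · by_cases hv : v ∈ e <;> simp [edgeItemUtil, hv]
  · simp [edgeItemUtil]

lemma card_filter_edgeItemUtil_eq_one (n : ℕ) (e : Sym2 V) (W : Finset (V ⊕ Fin n)) :
    #{x ∈ W | edgeItemUtil n e x = 1} = #{v ∈ W.toLeft | v ∈ e} + #W.toRight := by
  have : {x ∈ W | edgeItemUtil n e x = 1} = {v ∈ W.toLeft | v ∈ e}.disjSum W.toRight := by
    ext (v | d) <;> simp only [mem_filter] <;> simp [edgeItemUtil]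
  rw [this, card_disjSum]

variable (N : Finset (Sym2 V)) {ℓ K : ℕ} (α : ℕ → ℝ)

lemma owaUtil_edgeItemUtil (hℓ : 2 ≤ ℓ) (hα : ∀ j, j < ℓ - 1 → α j = 0)
    {W : Finset (V ⊕ Fin (ℓ - 2))} (hW : #W ≤ K) :
    owaUtil N (edgeItemUtil (ℓ - 2)) K α W =
      α (ℓ - 1) * #{e ∈ N | #{v ∈ W.toLeft | v ∈ e} + #W.toRight = ℓ} := by
  rw [owaUtil_of_zero_one N _ K α W fun e _ x _ => edgeItemUtil_eq_zero_or_one _ e x]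
  have hright : #W.toRight ≤ ℓ - 2 := by simpa using card_le_univ W.toRight
  have hagent : ∀ e ∈ N, ∑ j ∈ range (min #{x ∈ W | edgeItemUtil (ℓ - 2) e x = 1} K), α j =
      if #{v ∈ W.toLeft | v ∈ e} + #W.toRight = ℓ then α (ℓ - 1) else 0 := by
    intro e _
    have hK : #{x ∈ W | edgeItemUtil (ℓ - 2) e x = 1} ≤ K := (card_filter_le _ _).trans hW
    have hleft := Sym2.card_filter_mem_le_two_s10 W.toLeft e
    rw [min_eq_left hK, card_filter_edgeItemUtil_eq_one]
    exact sum_range_eq_ite_of_eq_zero α (by omega) hα (by omega)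
  rw [sum_congr rfl hagent, ← sum_filter, sum_const, nsmul_eq_mul, mul_comm]

lemma owaUtil_edgeItemUtil_eq_zero (hℓ : 2 ≤ ℓ) (hα : ∀ j, j < ℓ - 1 → α j = 0)
    {W : Finset (V ⊕ Fin (ℓ - 2))} (hW : #W ≤ K) (hright : #W.toRight < ℓ - 2) :
    owaUtil N (edgeItemUtil (ℓ - 2)) K α W = 0 := by
  rw [owaUtil_edgeItemUtil N α hℓ hα hW, filter_false_of_mem fun e _ => ?_, card_empty,
    Nat.cast_zero, mul_zero]
  have := Sym2.card_filter_mem_le_two_s10 W.toLeft e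
  omega

lemma owaUtil_edgeItemUtil_disjSum_univ (hN : ∀ e ∈ N, ¬ e.IsDiag) (hℓ : 2 ≤ ℓ)
    (hα : ∀ j, j < ℓ - 1 → α j = 0) {S : Finset V} (hS : #S ≤ K) :
    owaUtil N (edgeItemUtil (ℓ - 2)) (K + ℓ - 2) α (S.disjSum univ) =
      α (ℓ - 1) * #{e ∈ N | ∀ v ∈ e, v ∈ S} := by
  have hW : #(S.disjSum (univ : Finset (Fin (ℓ - 2)))) ≤ K + ℓ - 2 := by
    rw [card_disjSum, card_univ, Fintype.card_fin]
    omega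
  rw [owaUtil_edgeItemUtil N α hℓ hα hW, toLeft_disjSum, toRight_disjSum, card_univ,
    Fintype.card_fin]
  congr 3
  refine filter_congr fun e he => ?_
  rw [← Sym2.card_filter_mem_eq_two_iff S (hN e he)]
  omega

end EdgeAgents

theorem stmt_10_general {V : Type*} [Fintype V] [DecidableEq V]
    (G : SimpleGraph V) [DecidableRel G.Adj]
    (ℓ K : ℕ) (hℓ : 2 ≤ ℓ)
    (α : ℕ → ℝ)
    (hα_zero : ∀ j, j < ℓ - 1 → α j = 0)
    (hα_pos : 0 < α (ℓ - 1))
    (hne1 : ((Finset.univ : Finset (V ⊕ Fin (ℓ - 2))).powersetCard (K + ℓ - 2)).Nonempty)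
    (hne2 : ((Finset.univ : Finset V).powersetCard K).Nonempty) :
    (∀ S : Finset V, S.card = K →
      owaUtil G.edgeFinset
        (fun (e : Sym2 V) (x : V ⊕ Fin (ℓ - 2)) =>
          Sum.elim (fun v => if v ∈ e then (1 : ℝ) else 0) (fun _ => (1 : ℝ)) x)
        (K + ℓ - 2) α
        (S.image Sum.inl ∪ (Finset.univ : Finset (Fin (ℓ - 2))).image Sum.inr) =
      α (ℓ - 1) * ((G.edgeFinset.filter (fun e => ∀ v ∈ e, v ∈ S)).card : ℝ)) ∧
    ((Finset.univ : Finset (V ⊕ Fin (ℓ - 2))).powersetCard (K + ℓ - 2)).sup' hne1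
        (owaUtil G.edgeFinset
          (fun (e : Sym2 V) (x : V ⊕ Fin (ℓ - 2)) =>
            Sum.elim (fun v => if v ∈ e then (1 : ℝ) else 0) (fun _ => (1 : ℝ)) x)
          (K + ℓ - 2) α) =
      α (ℓ - 1) *
        ((Finset.univ : Finset V).powersetCard K).sup' hne2
          (fun S => ((G.edgeFinset.filter (fun e => ∀ v ∈ e, v ∈ S)).card : ℝ)) := by
  have hdiag : ∀ e ∈ G.edgeFinset, ¬ e.IsDiag := fun e he =>
    G.not_isDiag_of_mem_edgeSet (G.mem_edgeFinset.1 he)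
  have hcommittee : ∀ S : Finset V, #S = K →
      owaUtil G.edgeFinset (edgeItemUtil (ℓ - 2)) (K + ℓ - 2) α (S.disjSum univ) =
        α (ℓ - 1) * #{e ∈ G.edgeFinset | ∀ v ∈ e, v ∈ S} := fun S hS => by
    convert owaUtil_edgeItemUtil_disjSum_univ _ α hdiag hℓ hα_zero hS.le
  refine ⟨fun S hS => by rw [image_inl_union_image_inr]; exact hcommittee S hS, ?_⟩
  rw [mul₀_sup' hα_pos.le]
  refine sup'_eq_sup'_of_forall_exists_le _ _ (fun W hW => ?_) (fun S hS => ?_)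
  · rw [mem_powersetCard_univ] at hW
    by_cases hright : #W.toRight = ℓ - 2
    · have hleft : #W.toLeft = K := by
        have := card_toLeft_add_card_toRight (u := W)
        omega
      have hW_eq : W = W.toLeft.disjSum univ := by
        rw [eq_disjSum_iff]
        exact ⟨rfl, eq_univ_of_card _ (by simpa using hright)⟩
      refine ⟨W.toLeft, mem_powersetCard_univ.2 hleft, le_of_eq ?_⟩
      rw [← hcommittee _ hleft, ← hW_eq]
      rfl
    · obtain ⟨S, hS⟩ := hne2
      have hlt : #W.toRight < ℓ - 2 := by
        have : #W.toRight ≤ ℓ - 2 := by simpa using card_le_univ W.toRight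
        omega
      exact ⟨S, hS, (owaUtil_edgeItemUtil_eq_zero _ α hℓ hα_zero hW.le hlt).trans_le
        (by positivity)⟩
  · rw [mem_powersetCard_univ] at hS
    refine ⟨S.disjSum univ, mem_powersetCard_univ.2 ?_, (hcommittee S hS).ge⟩
    rw [card_disjSum, card_univ, Fintype.card_fin]
    omega

/-- Correctness of the reduction from Densest-k-Subgraph: items are the vertices of `G`
plus `ℓ − 2` dummy items, agents are the edges (an edge has utility `1` for each dummy
and each of its endpoints), the committee size is `K + ℓ − 2`, and the OWA `α` has
`α_1 = … = α_{ℓ−1} = 0` and `α_ℓ > 0` (0-indexed: `α j = 0` for `j < ℓ − 1` and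
`0 < α (ℓ−1)`). Then (i) for every size-`K` set `S ⊆ V`, the committee consisting of
`S` and all dummies has utility `α_ℓ · #{e : both endpoints of e lie in S}`, and
(ii) the optimal utility equals `α_ℓ` times the maximum edge count of a `K`-vertex
induced subgraph. -/
theorem stmt_10 {V : Type*} [Fintype V] [DecidableEq V]
    (G : SimpleGraph V) [DecidableRel G.Adj]
    (ℓ K : ℕ) (hℓ : 2 ≤ ℓ) (hK : 1 ≤ K) (hKV : K ≤ Fintype.card V)
    (α : ℕ → ℝ)
    (hα_nonneg : ∀ j, j < K + ℓ - 2 → 0 ≤ α j)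
    (hα_zero : ∀ j, j < ℓ - 1 → α j = 0)
    (hα_pos : 0 < α (ℓ - 1))
    (hne1 : ((Finset.univ : Finset (V ⊕ Fin (ℓ - 2))).powersetCard (K + ℓ - 2)).Nonempty)
    (hne2 : ((Finset.univ : Finset V).powersetCard K).Nonempty) :
    (∀ S : Finset V, S.card = K →
      owaUtil G.edgeFinset
        (fun (e : Sym2 V) (x : V ⊕ Fin (ℓ - 2)) =>
          Sum.elim (fun v => if v ∈ e then (1 : ℝ) else 0) (fun _ => (1 : ℝ)) x)
        (K + ℓ - 2) α
        (S.image Sum.inl ∪ (Finset.univ : Finset (Fin (ℓ - 2))).image Sum.inr) =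
      α (ℓ - 1) * ((G.edgeFinset.filter (fun e => ∀ v ∈ e, v ∈ S)).card : ℝ)) ∧
    ((Finset.univ : Finset (V ⊕ Fin (ℓ - 2))).powersetCard (K + ℓ - 2)).sup' hne1
        (owaUtil G.edgeFinset
          (fun (e : Sym2 V) (x : V ⊕ Fin (ℓ - 2)) =>
            Sum.elim (fun v => if v ∈ e then (1 : ℝ) else 0) (fun _ => (1 : ℝ)) x)
          (K + ℓ - 2) α) =
      α (ℓ - 1) *
        ((Finset.univ : Finset V).powersetCard K).sup' hne2
          (fun S => ((G.edgeFinset.filter (fun e => ∀ v ∈ e, v ∈ S)).card : ℝ)) :=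
  stmt_10_general G ℓ K hℓ α hα_zero hα_pos hne1 hne2
end

section
/- Let A be a set of m items and let each of n agents i designate a set T_i ⊆ A with |T_i| = x, where 1 ≤ x ≤ m. Fix integers ℓ and K with 1 ≤ ℓ ≤ x and 1 ≤ K ≤ m. Then there exists W ⊆ A with |W| = K such that Σ_{i=1}^{n} min(ℓ, |W ∩ T_i|) ≥ ℓ·n·(1 − (1 − x/(ℓm))^K). -/
/-!
Greedy argument. Let `F(W) = ∑ᵢ (ℓ - |W ∩ Tᵢ|)` be the number of free slots. Adding an item
`a ∉ W` fills one slot of every unsaturated agent `i ∋ a`, and an unsaturated agent with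
`c < ℓ` occupied slots owns `x - c ≥ (x/ℓ)(ℓ - c)` items outside `W`. Double counting gives a
total gain of at least `(x/ℓ) F(W)` over the at most `m` candidates, so the best one satisfies
`F(W ∪ {a}) ≤ (1 - x/(ℓm)) F(W)`. Starting from `F(∅) = ℓn` and iterating `K` times yields the
bound, since `∑ᵢ min(ℓ, |W ∩ Tᵢ|) = ℓn - F(W)`.
-/

open Finset

theorem card_compl_bipartiteBelow {A ι : Type*} [DecidableEq A] [Fintype A] (T : ι → Finset A)
    (W : Finset A) (i : ι) : #(Wᶜ.bipartiteBelow (· ∈ T ·) i) = #(T i) - #(W ∩ T i) := by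
  rw [bipartiteBelow, filter_mem_eq_inter, inter_comm, ← sdiff_eq_inter_compl, card_sdiff]

section FreeSlots

variable {A ι : Type*} [DecidableEq A] [Fintype ι] (ℓ : ℕ) (T : ι → Finset A)

-- Truncated subtraction: an agent with at least `ℓ` items of `W` has no free slot.
def freeSlots (W : Finset A) : ℕ := ∑ i, (ℓ - #(W ∩ T i))

def unsaturated (W : Finset A) : Finset ι := {i | #(W ∩ T i) < ℓ}

variable {ℓ T}

theorem sum_min_add_freeSlots (W : Finset A) :
    ∑ i, min ℓ #(W ∩ T i) + freeSlots ℓ T W = ℓ * Fintype.card ι := by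
  rw [freeSlots, ← sum_add_distrib, sum_congr rfl fun i _ ↦ (by omega : min ℓ #(W ∩ T i) + _ = ℓ),
    sum_const, card_univ, smul_eq_mul, mul_comm]

theorem freeSlots_empty : freeSlots ℓ T ∅ = ℓ * Fintype.card ι := by
  simp [freeSlots, mul_comm]

theorem freeSlots_insert_add_card {a : A} {W : Finset A} (ha : a ∉ W) :
    freeSlots ℓ T (insert a W) + #((unsaturated ℓ T W).bipartiteAbove (· ∈ T ·) a) =
      freeSlots ℓ T W := by
  rw [freeSlots, freeSlots, bipartiteAbove, unsaturated, filter_filter, card_filter,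
    ← sum_add_distrib]
  refine sum_congr rfl fun i _ ↦ ?_
  by_cases hai : a ∈ T i
  · rw [insert_inter_of_mem hai, card_insert_of_notMem fun h ↦ ha (mem_inter.1 h).1]
    simp only [hai, and_true]
    split_ifs <;> omega
  · simp [insert_inter_of_notMem hai, hai]

theorem mul_freeSlots_le_sum_card [Fintype A] {x : ℕ} (hT : ∀ i, #(T i) = x) (hℓx : ℓ ≤ x)
    (W : Finset A) :
    x * freeSlots ℓ T W ≤
      ℓ * ∑ a ∈ Wᶜ, #((unsaturated ℓ T W).bipartiteAbove (· ∈ T ·) a) := by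
  rw [sum_card_bipartiteAbove_eq_sum_card_bipartiteBelow, freeSlots, mul_sum, mul_sum,
    unsaturated, sum_filter]
  refine sum_le_sum fun i _ ↦ ?_
  rw [card_compl_bipartiteBelow, hT]
  split_ifs with h
  · have hcx : #(W ∩ T i) ≤ x := by omega
    zify [h.le, hcx]
    nlinarith
  · simp [Nat.sub_eq_zero_of_le (not_lt.1 h)]

theorem exists_freeSlots_insert_le [Fintype A] {x : ℕ} (hT : ∀ i, #(T i) = x) (hℓx : ℓ ≤ x)
    {W : Finset A} (hW : Wᶜ.Nonempty) :
    ∃ a ∉ W, x * freeSlots ℓ T W + ℓ * Fintype.card A * freeSlots ℓ T (insert a W) ≤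
      ℓ * Fintype.card A * freeSlots ℓ T W := by
  set gain := fun a ↦ #((unsaturated ℓ T W).bipartiteAbove (· ∈ T ·) a)
  obtain ⟨a, haW, hmax⟩ := exists_max_image Wᶜ gain hW
  refine ⟨a, mem_compl.1 haW, ?_⟩
  have hsum : ∑ b ∈ Wᶜ, gain b ≤ Fintype.card A * gain a :=
    (sum_le_card_nsmul _ _ _ hmax).trans (Nat.mul_le_mul_right _ (card_le_univ _))
  have hgain := mul_freeSlots_le_sum_card hT hℓx W
  rw [← freeSlots_insert_add_card (mem_compl.1 haW)] at hgain ⊢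
  nlinarith

theorem exists_card_eq_freeSlots_le [Fintype A] {x : ℕ} (hT : ∀ i, #(T i) = x) (hℓ : 1 ≤ ℓ)
    (hℓx : ℓ ≤ x) (hxA : x ≤ Fintype.card A) {k : ℕ} (hk : k ≤ Fintype.card A) :
    ∃ W : Finset A, #W = k ∧ (freeSlots ℓ T W : ℝ) ≤
      ℓ * Fintype.card ι * (1 - x / (ℓ * Fintype.card A)) ^ k := by
  induction k with
  | zero => exact ⟨∅, card_empty, by simp [freeSlots_empty]⟩
  | succ k ih =>
    obtain ⟨W, hWk, hW⟩ := ih (by omega)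
    have hWc : Wᶜ.Nonempty := by rw [← card_pos, card_compl]; omega
    obtain ⟨a, haW, ha⟩ := exists_freeSlots_insert_le hT hℓx hWc
    refine ⟨insert a W, by rw [card_insert_of_notMem haW, hWk], ?_⟩
    set q : ℝ := x / (ℓ * Fintype.card A)
    have hℓA : (0 : ℝ) < ℓ * Fintype.card A := by
      have : 0 < Fintype.card A := by omega
      positivity
    have hq : 0 ≤ 1 - q := by
      rw [sub_nonneg, div_le_one hℓA]
      exact_mod_cast hxA.trans (Nat.le_mul_of_pos_left _ hℓ)
    have hstep : (freeSlots ℓ T (insert a W) : ℝ) ≤ (1 - q) * freeSlots ℓ T W := by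
      rw [sub_mul, one_mul, div_mul_eq_mul_div, le_sub_iff_add_le, ← le_sub_iff_add_le',
        div_le_iff₀ hℓA]
      have := (Nat.cast_le (α := ℝ)).2 ha
      push_cast at this
      linarith
    calc (freeSlots ℓ T (insert a W) : ℝ)
        ≤ (1 - q) * freeSlots ℓ T W := hstep
      _ ≤ (1 - q) * (ℓ * Fintype.card ι * (1 - q) ^ k) := by gcongr
      _ = ℓ * Fintype.card ι * (1 - q) ^ (k + 1) := by ring

end FreeSlots

theorem stmt_13_general {A : Type*} [Fintype A] [DecidableEq A]
    (n m x ℓ K : ℕ) (hm : Fintype.card A = m)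
    (T : Fin n → Finset A) (hT : ∀ i, (T i).card = x)
    (hxm : x ≤ m)
    (hℓ1 : 1 ≤ ℓ) (hℓx : ℓ ≤ x)
    (hKm : K ≤ m) :
    ∃ W : Finset A, W.card = K ∧
      (ℓ : ℝ) * (n : ℝ) * (1 - (1 - (x : ℝ) / ((ℓ : ℝ) * (m : ℝ))) ^ K) ≤
        ∑ i : Fin n, (min ℓ ((W ∩ T i).card) : ℝ) := by
  subst hm
  obtain ⟨W, hWK, hW⟩ := exists_card_eq_freeSlots_le hT hℓ1 hℓx hxm hKm
  refine ⟨W, hWK, ?_⟩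
  have hslots := congrArg (Nat.cast : ℕ → ℝ) (sum_min_add_freeSlots (ℓ := ℓ) (T := T) W)
  push_cast at hslots
  rw [Fintype.card_fin] at hslots hW
  linarith

/-- The "free slots" counting bound: if each of `n` agents designates a set `T i` of
exactly `x` items out of `m`, then there is a size-`K` set `W` of items with
`∑_i min(ℓ, |W ∩ T i|) ≥ ℓ·n·(1 − (1 − x/(ℓm))^K)`. -/
theorem stmt_13 {A : Type*} [Fintype A] [DecidableEq A]
    (n m x ℓ K : ℕ) (hm : Fintype.card A = m)
    (T : Fin n → Finset A) (hT : ∀ i, (T i).card = x)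
    (hx1 : 1 ≤ x) (hxm : x ≤ m)
    (hℓ1 : 1 ≤ ℓ) (hℓx : ℓ ≤ x)
    (hK1 : 1 ≤ K) (hKm : K ≤ m) :
    ∃ W : Finset A, W.card = K ∧
      (ℓ : ℝ) * (n : ℝ) * (1 - (1 - (x : ℝ) / ((ℓ : ℝ) * (m : ℝ))) ^ K) ≤
        ∑ i : Fin n, (min ℓ ((W ∩ T i).card) : ℝ) :=
  stmt_13_general n m x ℓ K hm T hT hxm hℓ1 hℓx hKm
end

section
/- Let each of n agents have a linear order over a set A of m items. Let K, p, t be positive integers with K ≤ m, p ≤ K, p dividing K, and t ≤ p, and let γ ∈ (0,1] be such that x := γm/p is a positive integer with t·x ≤ m. Then there exists a set C ⊆ A with |C| ≤ K/p such that at least n·(1 − e^{−γK/p²}) agents each rank at least one member of C at a position in {(t−1)x + 1, …, t·x}. -/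
open Finset
open scoped Classical

/-!
Each agent ranks exactly `x` of the `m` items inside the window of positions `[(t-1)x, tx)`.
Double counting then shows that some item lies in the window of at least an `x/m = γ/p`
fraction of the still uncovered agents, so choosing such items greedily leaves at most
`n (1 - γ/p)^(K/p) ≤ n e^{-γK/p²}` agents uncovered after `K/p` steps.
-/

section GreedyCover

variable {ι A : Type*} (r : ι → A → Prop) [∀ i a, Decidable (r i a)]

lemma exists_card_mul_le_card_filter_mul [Fintype A] [Nonempty A] {x : ℕ}
    (hx : ∀ i, x ≤ #{a | r i a}) (S : Finset ι) :
    ∃ a, #S * x ≤ #{i ∈ S | r i a} * Fintype.card A := by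
  have hsum : ∑ _a : A, #S * x ≤ ∑ a : A, #{i ∈ S | r i a} * Fintype.card A := by
    calc ∑ _a : A, #S * x
        = #S * x * Fintype.card A := by simp [mul_comm]
      _ ≤ (∑ i ∈ S, #{a | r i a}) * Fintype.card A := by
          gcongr
          simpa using Finset.card_nsmul_le_sum S _ x (fun i _ => hx i)
      _ = ∑ a : A, #{i ∈ S | r i a} * Fintype.card A := by
          rw [← Finset.sum_mul]
          congr 1
          exact sum_card_bipartiteAbove_eq_sum_card_bipartiteBelow r
  obtain ⟨a, -, ha⟩ := exists_le_of_sum_le univ_nonempty hsum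
  exact ⟨a, ha⟩

noncomputable def uncovered [Fintype ι] (C : Finset A) : Finset ι := {i | ¬ ∃ a ∈ C, r i a}

lemma uncovered_insert [Fintype ι] (a : A) (C : Finset A) :
    uncovered r (insert a C) = {i ∈ uncovered r C | ¬ r i a} := by
  ext i
  simp only [uncovered, mem_filter, mem_univ, true_and, mem_insert, exists_eq_or_imp]
  rw [not_or, and_comm]

lemma card_covered_add_card_uncovered [Fintype ι] (C : Finset A) :
    #{i | ∃ a ∈ C, r i a} + #(uncovered r C) = Fintype.card ι :=
  card_filter_add_card_filter_not _

lemma exists_card_uncovered_insert_le [Fintype ι] [Fintype A] [Nonempty A] {x : ℕ}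
    (hx : ∀ i, x ≤ #{a | r i a}) (C : Finset A) :
    ∃ a, (#(uncovered r (insert a C)) : ℝ) ≤ #(uncovered r C) * (1 - x / Fintype.card A) := by
  set S := uncovered r C
  obtain ⟨a, ha⟩ := exists_card_mul_le_card_filter_mul r hx S
  refine ⟨a, ?_⟩
  have hsplit : (#{i ∈ S | r i a} : ℝ) + #{i ∈ S | ¬ r i a} = #S := by
    exact_mod_cast card_filter_add_card_filter_not (fun i => r i a)
  have hcover : (#S : ℝ) * x / Fintype.card A ≤ #{i ∈ S | r i a} := by
    rw [div_le_iff₀ (by exact_mod_cast Fintype.card_pos)]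
    exact_mod_cast ha
  rw [uncovered_insert, mul_one_sub, ← mul_div_assoc]
  linarith

lemma exists_card_le_card_uncovered_le [Fintype ι] [Fintype A] [Nonempty A] {x : ℕ}
    (hxA : x ≤ Fintype.card A) (hx : ∀ i, x ≤ #{a | r i a}) (k : ℕ) :
    ∃ C : Finset A, #C ≤ k ∧
      (#(uncovered r C) : ℝ) ≤ Fintype.card ι * (1 - x / Fintype.card A) ^ k := by
  induction k with
  | zero => exact ⟨∅, by simp, by simpa using card_le_univ _⟩
  | succ k ih =>
    obtain ⟨C, hCk, hC⟩ := ih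
    obtain ⟨a, ha⟩ := exists_card_uncovered_insert_le r hx C
    have hq : 0 ≤ 1 - (x : ℝ) / Fintype.card A :=
      sub_nonneg.mpr (div_le_one_of_le₀ (by exact_mod_cast hxA) (Nat.cast_nonneg _))
    refine ⟨insert a C, (card_insert_le a C).trans (by omega), ?_⟩
    calc (#(uncovered r (insert a C)) : ℝ)
        ≤ #(uncovered r C) * (1 - x / Fintype.card A) := ha
      _ ≤ Fintype.card ι * (1 - x / Fintype.card A) ^ k * (1 - x / Fintype.card A) := by
          gcongr
      _ = Fintype.card ι * (1 - x / Fintype.card A) ^ (k + 1) := by ring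

end GreedyCover

lemma one_sub_pow_le_exp_neg_mul {q : ℝ} (hq : q ≤ 1) (k : ℕ) :
    (1 - q) ^ k ≤ Real.exp (-(k * q)) := by
  calc (1 - q) ^ k ≤ Real.exp (-q) ^ k := by
        gcongr
        exact Real.one_sub_le_exp_neg q
    _ = Real.exp (-(k * q)) := by rw [← Real.exp_nat_mul, mul_neg]

lemma Equiv.card_filter_le_and_lt {A : Type*} [Fintype A] {m lo hi : ℕ} (e : A ≃ Fin m)
    (hhi : hi ≤ m) : #{a | lo ≤ (e a : ℕ) ∧ (e a : ℕ) < hi} = hi - lo := by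
  rw [← Nat.card_Ico, ← card_map (e.toEmbedding.trans Fin.valEmbedding)]
  congr 1
  ext k
  simp only [mem_map, mem_filter, mem_univ, true_and, Function.Embedding.trans_apply,
    Equiv.coe_toEmbedding, Fin.valEmbedding_apply, mem_Ico]
  constructor
  · rintro ⟨a, ha, rfl⟩
    exact ha
  · intro hk
    exact ⟨e.symm ⟨k, by omega⟩, by simpa using hk, by simp⟩

theorem stmt_14_general {A : Type*} [Fintype A]
    (n m : ℕ) (hm : Fintype.card A = m)
    (pos : Fin n → A ≃ Fin m)
    (K p t x : ℕ) (hp1 : 1 ≤ p) (ht1 : 1 ≤ t)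
    (hdvd : p ∣ K)
    (γ : ℝ)
    (hx : (x : ℝ) = γ * (m : ℝ) / (p : ℝ)) (hx1 : 1 ≤ x) (htx : t * x ≤ m) :
    ∃ C : Finset A, C.card ≤ K / p ∧
      (n : ℝ) * (1 - Real.exp (-(γ * (K : ℝ)) / ((p : ℝ) ^ 2))) ≤
        (((Finset.univ : Finset (Fin n)).filter
          (fun i => ∃ a ∈ C,
            (t - 1) * x ≤ ((pos i a : Fin m) : ℕ) ∧
              ((pos i a : Fin m) : ℕ) < t * x)).card : ℝ) := by
  set r : Fin n → A → Prop := fun i a => (t - 1) * x ≤ (pos i a : ℕ) ∧ (pos i a : ℕ) < t * x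
  have hxt : x ≤ t * x := Nat.le_mul_of_pos_left x ht1
  have hxm : x ≤ m := hxt.trans htx
  have hm0 : 0 < m := by omega
  have : Nonempty A := Fintype.card_pos_iff.mp (hm ▸ hm0)
  have hwindow (i : Fin n) : x ≤ #{a | r i a} := by
    rw [Equiv.card_filter_le_and_lt (pos i) htx, Nat.sub_one_mul, Nat.sub_sub_self hxt]
  obtain ⟨C, hCk, hC⟩ := exists_card_le_card_uncovered_le r (hm ▸ hxm) hwindow (K / p)
  refine ⟨C, hCk, ?_⟩
  have hsplit : (#{i | ∃ a ∈ C, r i a} : ℝ) + #(uncovered r C) = n := by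
    exact_mod_cast (card_covered_add_card_uncovered r C).trans (Fintype.card_fin n)
  have hexp : ((K / p : ℕ) : ℝ) * (x / m) = γ * K / p ^ 2 := by
    rw [Nat.cast_div hdvd (by positivity), hx]
    field_simp
  have hdecay := one_sub_pow_le_exp_neg_mul (q := x / m)
    (div_le_one_of_le₀ (by exact_mod_cast hxm) (Nat.cast_nonneg m)) (K / p)
  rw [hm, Fintype.card_fin] at hC
  rw [hexp, ← neg_div] at hdecay
  have hunc : (#(uncovered r C) : ℝ) ≤ n * Real.exp (-(γ * K) / p ^ 2) :=
    hC.trans (by gcongr)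
  change (n : ℝ) * _ ≤ #{i | ∃ a ∈ C, r i a}
  linarith

/-- The segment-covering lemma: if `n` agents each rank `m` items (`pos i a` is the
0-indexed position of item `a` in agent `i`'s ranking), `p ∣ K`, `t ≤ p`, and
`x = γm/p` is a positive integer with `t·x ≤ m`, then there is a set `C` of at most
`K/p` items such that at least `n·(1 − e^{−γK/p²})` agents each rank some member of
`C` at a (1-indexed) position in `{(t−1)x + 1, …, t·x}`. -/
theorem stmt_14 {A : Type*} [Fintype A] [DecidableEq A]
    (n m : ℕ) (hm : Fintype.card A = m)
    (pos : Fin n → A ≃ Fin m)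
    (K p t x : ℕ) (hK1 : 1 ≤ K) (hp1 : 1 ≤ p) (ht1 : 1 ≤ t)
    (hKm : K ≤ m) (hpK : p ≤ K) (hdvd : p ∣ K) (htp : t ≤ p)
    (γ : ℝ) (hγ0 : 0 < γ) (hγ1 : γ ≤ 1)
    (hx : (x : ℝ) = γ * (m : ℝ) / (p : ℝ)) (hx1 : 1 ≤ x) (htx : t * x ≤ m) :
    ∃ C : Finset A, C.card ≤ K / p ∧
      (n : ℝ) * (1 - Real.exp (-(γ * (K : ℝ)) / ((p : ℝ) ^ 2))) ≤
        (((Finset.univ : Finset (Fin n)).filter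
          (fun i => ∃ a ∈ C,
            (t - 1) * x ≤ ((pos i a : Fin m) : ℕ) ∧
              ((pos i a : Fin m) : ℕ) < t * x)).card : ℝ) :=
  stmt_14_general n m hm pos K p t x hp1 ht1 hdvd γ hx hx1 htx
end

section
/- Fix a real p > 1 and integers ℓ, K with 1 ≤ ℓ ≤ K ≤ m. Let g = gprog[p] = (p^{K−1}, p^{K−2}, …, p, 1) be the geometric progression OWA of length K, and let g|ℓ be the vector obtained from g by replacing its entries in positions ℓ+1, …, K by 0. Then for every W ⊆ A with |W| = K, u^{g|ℓ}(W) ≥ (1 − p^{−ℓ}) · u^{g}(W). -/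
/-!
Write `g_j = p ^ (K - 1 - j)` and let `x_0 ≥ x_1 ≥ ⋯ ≥ 0` be one agent's sorted utilities.
Truncating `g` after position `ℓ` loses the tail `∑_{ℓ ≤ j < K} g_j x_j`. Since
`g_{ℓ + i} = p ^ (-ℓ) g_i` and `x_{ℓ + i} ≤ x_i`, the tail is at most `p ^ (-ℓ)` times the
full sum `∑_{j < K} g_j x_j`; summing over agents gives the inequality.
-/

open Finset

section SortedDesc

variable {α : Type*} [LinearOrder α] (s : Multiset α) {d : α}

theorem antitone_getD_reverse_sort (hd : ∀ x ∈ s, d ≤ x) :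
    Antitone fun j => (s.sort (· ≤ ·)).reverse.getD j d := by
  set L := (s.sort (· ≤ ·)).reverse
  have hL : L.SortedGE := List.sortedGE_reverse.mpr (Multiset.pairwise_sort s _).sortedLE
  intro j k hjk
  dsimp only
  by_cases hk : k < L.length
  · rw [List.getD_eq_getElem _ _ hk, List.getD_eq_getElem _ _ (hjk.trans_lt hk)]
    exact hL.antitone_get (a := ⟨j, hjk.trans_lt hk⟩) (b := ⟨k, hk⟩) hjk
  · rw [List.getD_eq_default _ _ (not_lt.mp hk)]
    by_cases hj : j < L.length
    · rw [List.getD_eq_getElem _ _ hj]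
      exact hd _ ((Multiset.mem_sort _).mp (List.mem_reverse.mp (List.getElem_mem hj)))
    · rw [List.getD_eq_default _ _ (not_lt.mp hj)]

theorem le_getD_reverse_sort (hd : ∀ x ∈ s, d ≤ x) (j : ℕ) :
    d ≤ (s.sort (· ≤ ·)).reverse.getD j d := by
  have hfar := antitone_getD_reverse_sort s hd (Nat.le_add_right j (s.sort (· ≤ ·)).reverse.length)
  dsimp only at hfar
  rwa [List.getD_eq_default _ _ (Nat.le_add_left _ _)] at hfar

end SortedDesc

theorem sum_range_eq_sum_ite_lt_add_sum_Ico {M : Type*} [AddCommMonoid M] (f : ℕ → M)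
    (ℓ K : ℕ) :
    ∑ j ∈ range K, f j = ∑ j ∈ range K, (if j < ℓ then f j else 0) + ∑ j ∈ Ico ℓ K, f j := by
  have hIco : (range K).filter (fun j => ¬ j < ℓ) = Ico ℓ K := by ext; simp; omega
  rw [← hIco, sum_filter, ← sum_add_distrib]
  exact sum_congr rfl fun j _ => by split_ifs <;> simp

section GeometricWeights

variable {p : ℝ} {x : ℕ → ℝ}

theorem sum_Ico_pow_mul_le (hp : 0 < p) (hx : Antitone x) (hx0 : ∀ j, 0 ≤ x j) (ℓ K : ℕ) :
    ∑ j ∈ Ico ℓ K, p ^ (K - 1 - j) * x j ≤ (p ^ ℓ)⁻¹ * ∑ j ∈ range K, p ^ (K - 1 - j) * x j := by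
  rw [sum_Ico_eq_sum_range, mul_sum]
  calc ∑ i ∈ range (K - ℓ), p ^ (K - 1 - (ℓ + i)) * x (ℓ + i)
      ≤ ∑ i ∈ range (K - ℓ), (p ^ ℓ)⁻¹ * (p ^ (K - 1 - i) * x i) := by
        refine sum_le_sum fun i hi => ?_
        have hpow : p ^ (K - 1 - i) = p ^ ℓ * p ^ (K - 1 - (ℓ + i)) := by
          rw [← pow_add]; congr 1; grind
        rw [hpow, ← mul_assoc, ← mul_assoc, inv_mul_cancel₀ (by positivity), one_mul]
        exact mul_le_mul_of_nonneg_left (hx (Nat.le_add_left i ℓ)) (by positivity)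
    _ ≤ ∑ i ∈ range K, (p ^ ℓ)⁻¹ * (p ^ (K - 1 - i) * x i) :=
        sum_le_sum_of_subset_of_nonneg (range_subset_range.mpr (Nat.sub_le K ℓ))
          fun i _ _ => by have := hx0 i; positivity

theorem one_sub_inv_pow_mul_sum_le_sum_truncated (hp : 0 < p) (hx : Antitone x)
    (hx0 : ∀ j, 0 ≤ x j) (ℓ K : ℕ) :
    (1 - 1 / p ^ ℓ) * ∑ j ∈ range K, p ^ (K - 1 - j) * x j ≤
      ∑ j ∈ range K, (if j < ℓ then p ^ (K - 1 - j) else 0) * x j := by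
  have hsplit := sum_range_eq_sum_ite_lt_add_sum_Ico (fun j => p ^ (K - 1 - j) * x j) ℓ K
  have htail := sum_Ico_pow_mul_le hp hx hx0 ℓ K
  simp only [ite_mul, zero_mul, one_div] at hsplit ⊢
  linarith

end GeometricWeights

theorem stmt_18_general {I A : Type*} [DecidableEq A]
    (N : Finset I) (u : I → A → ℝ) (hu : ∀ i a, 0 ≤ u i a)
    (p : ℝ) (hp : 1 < p)
    (ℓ K : ℕ) :
    ∀ W : Finset A, W.card = K →
      (1 - 1 / p ^ ℓ) * owaUtil N u K (fun j => p ^ (K - 1 - j)) W ≤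
        owaUtil N u K (fun j => if j < ℓ then p ^ (K - 1 - j) else 0) W := by
  intro W _
  rw [owaUtil, owaUtil, mul_sum]
  refine sum_le_sum fun i _ => ?_
  have hW : ∀ y ∈ W.1.map (u i), 0 ≤ y := by
    simp only [Multiset.mem_map]
    rintro _ ⟨a, _, rfl⟩
    exact hu i a
  exact one_sub_inv_pow_mul_sum_le_sum_truncated (zero_lt_one.trans hp)
    (antitone_getD_reverse_sort _ hW) (le_getD_reverse_sort _ hW) ℓ K

/-- Truncation inequality for the geometric-progression OWA `gprog[p] =
(p^{K−1}, …, p, 1)` (0-indexed: entry `j` is `p^{K−1−j}`): replacing the entries in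
positions beyond `ℓ` by `0` loses at most a `p^{−ℓ}` fraction of the total utility,
i.e. `u^{g|ℓ}(W) ≥ (1 − p^{−ℓ})·u^{g}(W)` for every size-`K` set `W`. -/
theorem stmt_18 {I A : Type*} [DecidableEq A]
    (N : Finset I) (u : I → A → ℝ) (hu : ∀ i a, 0 ≤ u i a)
    (p : ℝ) (hp : 1 < p)
    (ℓ K : ℕ) (hℓ : 1 ≤ ℓ) (hℓK : ℓ ≤ K) :
    ∀ W : Finset A, W.card = K →
      (1 - 1 / p ^ ℓ) * owaUtil N u K (fun j => p ^ (K - 1 - j)) W ≤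
        owaUtil N u K (fun j => if j < ℓ then p ^ (K - 1 - j) else 0) W :=
  stmt_18_general N u hu p hp ℓ K
end

section
/- Let 0 ≤ j < K ≤ |A|. Any size-K subset W of A that maximizes u^{K-best} over all size-K subsets of A satisfies u^{(K−j)-best}(W) ≥ ((K−j)/K) · max_{S ⊆ A, |S| = K} u^{(K−j)-best}(S). -/
open Finset

namespace List

variable {α : Type*} [Preorder α] {l : List α} {d : α}

theorem le_getD_of_forall_le (hd : ∀ a ∈ l, d ≤ a) (n : ℕ) : d ≤ l.getD n d := by
  rcases lt_or_ge n l.length with hn | hn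
  · rw [getD_eq_getElem l d hn]
    exact hd _ (getElem_mem hn)
  · rw [getD_eq_default l d hn]

theorem antitone_getD_of_pairwise (hl : l.Pairwise (· ≥ ·)) (hd : ∀ a ∈ l, d ≤ a) :
    Antitone (l.getD · d) := by
  intro a b hab
  rcases lt_or_ge b l.length with hb | hb
  · have ha : a < l.length := lt_of_le_of_lt hab hb
    simp only [getD_eq_getElem l d hb, getD_eq_getElem l d ha]
    exact hl.rel_get_of_le (a := ⟨a, ha⟩) (b := ⟨b, hb⟩) hab
  · simp only [getD_eq_default l d hb]
    exact le_getD_of_forall_le hd a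

end List

section SortedDesc

variable {α : Type*} [LinearOrder α] {s : Multiset α} {d : α}

theorem le_getD_sort_reverse (hd : ∀ a ∈ s, d ≤ a) (n : ℕ) :
    d ≤ ((s.sort (· ≤ ·)).reverse.getD n d) :=
  List.le_getD_of_forall_le (by simpa only [List.mem_reverse, Multiset.mem_sort]) n

theorem antitone_getD_sort_reverse (hd : ∀ a ∈ s, d ≤ a) :
    Antitone ((s.sort (· ≤ ·)).reverse.getD · d) :=
  List.antitone_getD_of_pairwise
    (List.pairwise_reverse.mpr (Multiset.pairwise_sort s (· ≤ ·)))
    (by simpa only [List.mem_reverse, Multiset.mem_sort])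

end SortedDesc

section IndicatorSums

variable {R : Type*} [Semiring R]

theorem sum_range_indicator_lt_mul {k K : ℕ} (x : ℕ → R) (hkK : k ≤ K) :
    ∑ t ∈ range K, (if t < k then (1 : R) else 0) * x t = ∑ t ∈ range k, x t := by
  simp only [ite_mul, one_mul, zero_mul]
  rw [← sum_filter]
  congr 1
  ext t
  simp only [mem_filter, mem_range]
  omega

theorem card_mul_sum_range_le_of_antitone [LinearOrder R] [IsStrictOrderedRing R]
    [ExistsAddOfLE R] {x : ℕ → R} (hx : Antitone x) {k K : ℕ} (hkK : k ≤ K) :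
    (k : R) * ∑ t ∈ range K, x t ≤ K * ∑ t ∈ range k, x t := by
  have hind : Antitone fun t : ℕ => if t < k then (1 : R) else 0 := by
    intro a b hab
    dsimp only
    split_ifs <;> first | omega | exact le_rfl | exact zero_le_one
  have hcard : ∑ t ∈ range K, (if t < k then (1 : R) else 0) = k := by
    simpa using sum_range_indicator_lt_mul (fun _ => (1 : R)) hkK
  have := ((hind.monovary hx).monovaryOn (range K)).sum_mul_sum_le_card_mul_sum
  rwa [hcard, card_range, sum_range_indicator_lt_mul x hkK] at this

end IndicatorSums

section OWA

variable {I A : Type*} [DecidableEq A] {N : Finset I} {u : I → A → ℝ} {K : ℕ}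

theorem owaUtil_mono (hu : ∀ i a, 0 ≤ u i a) {α β : ℕ → ℝ} (hαβ : ∀ t < K, α t ≤ β t)
    (W : Finset A) : owaUtil N u K α W ≤ owaUtil N u K β W := by
  refine sum_le_sum fun i _ => sum_le_sum fun t ht => ?_
  have hx := le_getD_sort_reverse (s := W.1.map (u i)) (d := 0) (by simp [hu i]) t
  exact mul_le_mul_of_nonneg_right (hαβ t (mem_range.mp ht)) hx

theorem div_mul_owaUtil_le (hu : ∀ i a, 0 ≤ u i a) {k : ℕ} (hkK : k ≤ K) (W : Finset A) :
    (k / K : ℝ) * owaUtil N u K (fun _ => 1) W ≤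
      owaUtil N u K (fun t => if t < k then 1 else 0) W := by
  rw [owaUtil, owaUtil, mul_sum]
  refine sum_le_sum fun i _ => ?_
  have hx := antitone_getD_sort_reverse (s := W.1.map (u i)) (d := 0) (by simp [hu i])
  rw [sum_range_indicator_lt_mul _ hkK]
  rcases Nat.eq_zero_or_pos K with rfl | hK
  · obtain rfl : k = 0 := Nat.le_zero.mp hkK
    simp
  rw [div_mul_eq_mul_div, div_le_iff₀ (by positivity), mul_comm _ (K : ℝ)]
  simpa only [one_mul] using card_mul_sum_range_le_of_antitone hx hkK

end OWA

theorem stmt_19_general {I A : Type*} [DecidableEq A] [Fintype A]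
    (N : Finset I) (u : I → A → ℝ) (hu : ∀ i a, 0 ≤ u i a)
    (K j : ℕ)
    (W : Finset A)
    (hWopt : ∀ S : Finset A, S.card = K →
      owaUtil N u K (fun _ => (1 : ℝ)) S ≤ owaUtil N u K (fun _ => (1 : ℝ)) W)
    (hne : ((Finset.univ : Finset A).powersetCard K).Nonempty) :
    (((K - j : ℕ) : ℝ) / (K : ℝ)) *
        ((Finset.univ : Finset A).powersetCard K).sup' hne
          (owaUtil N u K (fun i => if i < K - j then (1 : ℝ) else 0)) ≤
      owaUtil N u K (fun i => if i < K - j then (1 : ℝ) else 0) W := by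
  obtain ⟨S, hS, hSmax⟩ := exists_mem_eq_sup' hne
    (owaUtil N u K (fun i => if i < K - j then (1 : ℝ) else 0))
  have hfrac : (0 : ℝ) ≤ ((K - j : ℕ) : ℝ) / K := by positivity
  rw [hSmax]
  calc _ ≤ ((K - j : ℕ) : ℝ) / K * owaUtil N u K (fun _ => 1) S :=
        mul_le_mul_of_nonneg_left (owaUtil_mono hu (fun t _ => by split_ifs <;> norm_num) S) hfrac
    _ ≤ ((K - j : ℕ) : ℝ) / K * owaUtil N u K (fun _ => 1) W :=
        mul_le_mul_of_nonneg_left (hWopt S (mem_powersetCard_univ.mp hS)) hfrac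
    _ ≤ _ := div_mul_owaUtil_le hu (Nat.sub_le K j) W

/-- Key step for the PTAS for `(K−j)`-best-OWA-Winner: any size-`K` set `W`
maximizing the `K`-best utility is a `((K−j)/K)`-approximate solution for the
`(K−j)`-best OWA, for every `0 ≤ j < K`. -/
theorem stmt_19 {I A : Type*} [DecidableEq A] [Fintype A]
    (N : Finset I) (u : I → A → ℝ) (hu : ∀ i a, 0 ≤ u i a)
    (K j : ℕ) (hj : j < K) (hKm : K ≤ Fintype.card A)
    (W : Finset A) (hWcard : W.card = K)
    (hWopt : ∀ S : Finset A, S.card = K →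
      owaUtil N u K (fun _ => (1 : ℝ)) S ≤ owaUtil N u K (fun _ => (1 : ℝ)) W)
    (hne : ((Finset.univ : Finset A).powersetCard K).Nonempty) :
    (((K - j : ℕ) : ℝ) / (K : ℝ)) *
        ((Finset.univ : Finset A).powersetCard K).sup' hne
          (owaUtil N u K (fun i => if i < K - j then (1 : ℝ) else 0)) ≤
      owaUtil N u K (fun i => if i < K - j then (1 : ℝ) else 0) W :=
  stmt_19_general N u hu K j W hWopt hne
end
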